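/- arXiv:2407.20744 — 8 statements merged into one kernel-verified Lean document; each statement's English description precedes it below -/
import Mathlib

section
/- For any real random variable X with finite variance σ² and density bounded by M (i.e. ess sup of the density equals M), one has M²σ² ≥ 1/12. -/
open MeasureTheory Set

/-! For `c ≥ 0` and a density `0 ≤ p ≤ M`, pointwise
`(x - a)² p(x) ≥ c² p(x) + M ((x - a)² - c²) 𝟙_{|x - a| ≤ c}(x)`, since the bracket is `≤ 0` exactly
where the indicator is on. Integrating gives `∫ (x - a)² p ≥ c² - 4 M c³ / 3`, a bound attained by
the uniform density `M` on `[a - c, a + c]`; at `c = 1 / (2M)` it equals `1 / (12 M²)`. -/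

theorem pos_of_ae_le_of_integral_pos {α : Type*} [MeasurableSpace α] {μ : Measure α}
    {f : α → ℝ} {M : ℝ} (hfM : ∀ᵐ x ∂μ, f x ≤ M) (hf : 0 < ∫ x, f x ∂μ) : 0 < M := by
  by_contra! hM
  exact (integral_nonpos_of_ae (hfM.mono fun x hx => hx.trans hM)).not_gt hf

theorem intervalIntegral.integral_sub_sq_sub_sq (a c : ℝ) :
    ∫ x in (a - c)..(a + c), ((x - a) ^ 2 - c ^ 2) = -(4 / 3) * c ^ 3 := by
  rw [intervalIntegral.integral_comp_sub_right (fun x => x ^ 2 - c ^ 2)]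
  simp [integral_pow]
  ring

theorem sq_mul_add_indicator_le_sq_mul {a c q M : ℝ} (hc : 0 ≤ c) (hq0 : 0 ≤ q) (hqM : q ≤ M)
    (x : ℝ) :
    c ^ 2 * q + M * (Icc (a - c) (a + c)).indicator (fun x => (x - a) ^ 2 - c ^ 2) x ≤
      (x - a) ^ 2 * q := by
  by_cases hx : x ∈ Icc (a - c) (a + c)
  · rw [indicator_of_mem hx]
    have : (x - a) ^ 2 ≤ c ^ 2 := sq_le_sq' (by linarith [hx.1]) (by linarith [hx.2])
    nlinarith
  · rw [indicator_of_notMem hx]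
    rw [mem_Icc, not_and_or, not_le, not_le] at hx
    have : c ^ 2 ≤ (x - a) ^ 2 := by rcases hx with h | h <;> nlinarith
    nlinarith

theorem sq_sub_mul_cube_le_integral_sq_mul {p : ℝ → ℝ} {M : ℝ} (hp0 : ∀ᵐ x, 0 ≤ p x)
    (hpM : ∀ᵐ x, p x ≤ M) (hp1 : ∫ x, p x = 1) {a : ℝ}
    (hint : Integrable fun x => (x - a) ^ 2 * p x) {c : ℝ} (hc : 0 ≤ c) :
    c ^ 2 - 4 / 3 * M * c ^ 3 ≤ ∫ x, (x - a) ^ 2 * p x := by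
  set g := (Icc (a - c) (a + c)).indicator fun x => (x - a) ^ 2 - c ^ 2
  have hpint : Integrable p := Integrable.of_integral_ne_zero (by simp [hp1])
  have hgint : Integrable g :=
    (Continuous.integrableOn_Icc (by fun_prop)).integrable_indicator measurableSet_Icc
  have hg : ∫ x, g x = -(4 / 3) * c ^ 3 := by
    rw [integral_indicator measurableSet_Icc, integral_Icc_eq_integral_Ioc,
      ← intervalIntegral.integral_of_le (by linarith), intervalIntegral.integral_sub_sq_sub_sq]
  calc c ^ 2 - 4 / 3 * M * c ^ 3 = ∫ x, (c ^ 2 * p x + M * g x) := by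
        rw [integral_add (hpint.const_mul _) (hgint.const_mul _), integral_const_mul,
          integral_const_mul, hp1, hg]
        ring
    _ ≤ ∫ x, (x - a) ^ 2 * p x :=
        integral_mono_ae ((hpint.const_mul _).add (hgint.const_mul _)) hint
          (by filter_upwards [hp0, hpM] with x hx0 hxM
              exact sq_mul_add_indicator_le_sq_mul hc hx0 hxM x)

theorem maxDensity_sq_mul_variance_ge_general (p : ℝ → ℝ)
    (hp0 : ∀ x, 0 ≤ p x) (hp1 : ∫ x, p x = 1)
    (μ σ M : ℝ)
    (hσ : σ ^ 2 = ∫ x, (x - μ) ^ 2 * p x)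
    (hint2 : Integrable fun x => (x - μ) ^ 2 * p x)
    (hMbd : ∀ᵐ x ∂volume, p x ≤ M) :
    M ^ 2 * σ ^ 2 ≥ 1 / 12 := by
  have hM : 0 < M := pos_of_ae_le_of_integral_pos hMbd (by rw [hp1]; exact one_pos)
  have h := sq_sub_mul_cube_le_integral_sq_mul (ae_of_all _ hp0) hMbd hp1 hint2
    (c := 1 / (2 * M)) (by positivity)
  have hc : (1 / (2 * M)) ^ 2 - 4 / 3 * M * (1 / (2 * M)) ^ 3 = 1 / (12 * M ^ 2) := by
    field_simp
    ring
  rw [← hσ, hc, div_le_iff₀ (by positivity)] at h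
  linarith

/-- For a real random variable with density `p` bounded with essential supremum `M`
and variance `σ²`, one has `M² σ² ≥ 1/12`. -/
theorem maxDensity_sq_mul_variance_ge (p : ℝ → ℝ) (hp : Measurable p)
    (hp0 : ∀ x, 0 ≤ p x) (hp1 : ∫ x, p x = 1)
    (μ σ M : ℝ)
    (hμ : μ = ∫ x, x * p x)
    (hσ : σ ^ 2 = ∫ x, (x - μ) ^ 2 * p x)
    (hint1 : Integrable fun x => x * p x)
    (hint2 : Integrable fun x => (x - μ) ^ 2 * p x)
    (hM : essSup p volume = M)
    (hMbd : ∀ᵐ x ∂volume, p x ≤ M) :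
    M ^ 2 * σ ^ 2 ≥ 1 / 12 :=
  maxDensity_sq_mul_variance_ge_general p hp0 hp1 μ σ M hσ hint2 hMbd
end

section
/- For any non-negative Borel measurable function q on the real line, (ess sup q)² · ∫ x² q(x) dx ≥ (1/12) (∫ q(x) dx)³. -/
/-!
With `S = ess sup q`, one has `r² q(x) ≤ x² q(x) + S (r² - x²)₊` for almost every `x` and every
`r ≥ 0`. Integrating, `r² ∫ q ≤ ∫ x² q + (4/3) S r³`, and the choice `r = ∫ q / (2 S)` gives
`(∫ q)³ / (4 S²) ≤ ∫ x² q + (∫ q)³ / (6 S²)`, which is the claim.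
-/

open MeasureTheory ENNReal

lemma lintegral_ofReal_sq_sub_sq {r : ℝ} (hr : 0 ≤ r) :
    ∫⁻ x : ℝ, ENNReal.ofReal (r ^ 2 - x ^ 2) = ENNReal.ofReal (4 / 3 * r ^ 3) := by
  have h_support : ∀ x, ENNReal.ofReal (r ^ 2 - x ^ 2)
      = (Set.Icc (-r) r).indicator (fun x => ENNReal.ofReal (r ^ 2 - x ^ 2)) x := by
    intro x
    by_cases hx : x ∈ Set.Icc (-r) r
    · rw [Set.indicator_of_mem hx]
    · rw [Set.indicator_of_notMem hx, ENNReal.ofReal_eq_zero, sub_nonpos, sq_le_sq,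
        abs_of_nonneg hr]
      rw [Set.mem_Icc, ← abs_le] at hx
      exact (not_le.mp hx).le
  have h_nonneg : ∀ᵐ x ∂volume.restrict (Set.Icc (-r) r), 0 ≤ r ^ 2 - x ^ 2 := by
    filter_upwards [ae_restrict_mem measurableSet_Icc] with x hx
    nlinarith [hx.1, hx.2]
  rw [lintegral_congr h_support, lintegral_indicator measurableSet_Icc,
    ← ofReal_integral_eq_lintegral_ofReal
      (by fun_prop : Continuous fun x : ℝ => r ^ 2 - x ^ 2).integrableOn_Icc h_nonneg,
    integral_Icc_eq_integral_Ioc, ← intervalIntegral.integral_of_le (by linarith),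
    intervalIntegral.integral_sub intervalIntegrable_const
      (intervalIntegral.intervalIntegrable_pow 2)]
  simp only [intervalIntegral.integral_const, sub_neg_eq_add, smul_eq_mul, integral_pow]
  ring_nf

lemma ofReal_sq_mul_le_add {a S : ℝ≥0∞} (ha : a ≤ S) (r x : ℝ) :
    ENNReal.ofReal (r ^ 2) * a
      ≤ ENNReal.ofReal (x ^ 2) * a + S * ENNReal.ofReal (r ^ 2 - x ^ 2) := by
  rcases le_or_gt (r ^ 2) (x ^ 2) with h | h
  · exact le_add_right (by gcongr)
  · calc ENNReal.ofReal (r ^ 2) * a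
        = ENNReal.ofReal (x ^ 2) * a + ENNReal.ofReal (r ^ 2 - x ^ 2) * a := by
          rw [← add_mul, ← ENNReal.ofReal_add (sq_nonneg x) (by linarith), add_sub_cancel]
      _ ≤ _ := by rw [mul_comm S]; gcongr

lemma cube_le_twelve_mul_of_forall_sq_mul_le {M μ J : ℝ} (hM : 0 < M) (hμ : 0 ≤ μ)
    (h : ∀ r, 0 ≤ r → r ^ 2 * μ ≤ J + 4 / 3 * r ^ 3 * M) : μ ^ 3 ≤ 12 * M ^ 2 * J := by
  have h_opt := h (μ / (2 * M)) (by positivity)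
  have h_val : (μ / (2 * M)) ^ 2 * μ - 4 / 3 * (μ / (2 * M)) ^ 3 * M = μ ^ 3 / (12 * M ^ 2) := by
    field_simp
    ring
  rw [← div_le_iff₀' (by positivity)]
  linarith

lemma ENNReal.pow_three_div_twelve_le_of_forall_sq_mul_le {S m I : ℝ≥0∞} (hS : S = 0 → m = 0)
    (hI : I = 0 → m = 0)
    (h : ∀ r : ℝ, 0 ≤ r → ENNReal.ofReal (r ^ 2) * m ≤ I + S * ENNReal.ofReal (4 / 3 * r ^ 3)) :
    m ^ 3 / 12 ≤ S ^ 2 * I := by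
  rcases eq_or_ne m 0 with hm0 | hm0
  · simp [hm0]
  have hS0 : S ≠ 0 := mt hS hm0
  have hI0 : I ≠ 0 := mt hI hm0
  rcases eq_or_ne S ⊤ with rfl | hS_top
  · simp [ENNReal.top_mul hI0]
  rcases eq_or_ne I ⊤ with rfl | hI_top
  · simp [ENNReal.mul_top (pow_ne_zero 2 hS0)]
  have hm_top : m ≠ ⊤ := by
    rintro rfl
    have h1 := h 1 zero_le_one
    rw [one_pow, ofReal_one, one_mul, top_le_iff] at h1
    exact (by finiteness : I + S * ENNReal.ofReal (4 / 3 * 1 ^ 3) ≠ ⊤) h1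
  have key : ∀ r, 0 ≤ r → r ^ 2 * m.toReal ≤ I.toReal + 4 / 3 * r ^ 3 * S.toReal := by
    intro r hr
    have h_real := ENNReal.toReal_mono (by finiteness) (h r hr)
    rw [toReal_mul, toReal_ofReal (sq_nonneg r), toReal_add hI_top (by finiteness), toReal_mul,
      toReal_ofReal (by positivity)] at h_real
    linarith
  have h_cube := cube_le_twelve_mul_of_forall_sq_mul_le (ENNReal.toReal_pos hS0 hS_top)
    ENNReal.toReal_nonneg key
  rw [← ENNReal.toReal_le_toReal (by finiteness) (by finiteness)]
  simp only [toReal_div, toReal_pow, toReal_ofNat, toReal_mul]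
  linarith

lemma ofReal_sq_mul_lintegral_le (f : ℝ → ℝ≥0∞) {r : ℝ} (hr : 0 ≤ r) :
    ENNReal.ofReal (r ^ 2) * ∫⁻ x, f x
      ≤ (∫⁻ x, ENNReal.ofReal (x ^ 2) * f x)
        + essSup f volume * ENNReal.ofReal (4 / 3 * r ^ 3) := by
  calc ENNReal.ofReal (r ^ 2) * ∫⁻ x, f x = ∫⁻ x, ENNReal.ofReal (r ^ 2) * f x :=
        (lintegral_const_mul' _ _ ofReal_ne_top).symm
    _ ≤ ∫⁻ x, (ENNReal.ofReal (x ^ 2) * f x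
          + essSup f volume * ENNReal.ofReal (r ^ 2 - x ^ 2)) := by
        refine lintegral_mono_ae ?_
        filter_upwards [ENNReal.ae_le_essSup f] with x hx
        exact ofReal_sq_mul_le_add hx r x
    _ = _ := by
        rw [lintegral_add_right' _ (by fun_prop), lintegral_const_mul _ (by fun_prop),
          lintegral_ofReal_sq_sub_sq hr]

lemma lintegral_eq_zero_of_essSup_eq_zero {α : Type*} [MeasurableSpace α] {μ : Measure α}
    {f : α → ℝ≥0∞} (hf : AEMeasurable f μ) (h : essSup f μ = 0) : ∫⁻ x, f x ∂μ = 0 := by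
  refine (lintegral_eq_zero_iff' hf).2 ?_
  filter_upwards [ENNReal.ae_le_essSup (μ := μ) f] with x hx
  exact nonpos_iff_eq_zero.1 (h ▸ hx)

lemma lintegral_eq_zero_of_lintegral_sq_mul_eq_zero {μ : Measure ℝ} [NullSingletonClass μ]
    {f : ℝ → ℝ≥0∞} (hf : AEMeasurable f μ) (h : ∫⁻ x, ENNReal.ofReal (x ^ 2) * f x ∂μ = 0) :
    ∫⁻ x, f x ∂μ = 0 := by
  refine (lintegral_eq_zero_iff' hf).2 ?_
  have h_ne_zero : ∀ᵐ x ∂μ, x ≠ 0 := by simp [ae_iff, measure_singleton]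
  filter_upwards [(lintegral_eq_zero_iff' (by fun_prop)).1 h, h_ne_zero] with x hx hx0
  simpa [hx0] using hx

lemma lintegral_pow_three_div_twelve_le {f : ℝ → ℝ≥0∞} (hf : AEMeasurable f) :
    (∫⁻ x, f x) ^ 3 / 12 ≤ essSup f volume ^ 2 * ∫⁻ x, ENNReal.ofReal (x ^ 2) * f x :=
  ENNReal.pow_three_div_twelve_le_of_forall_sq_mul_le (lintegral_eq_zero_of_essSup_eq_zero hf)
    (lintegral_eq_zero_of_lintegral_sq_mul_eq_zero hf) fun _ hr => ofReal_sq_mul_lintegral_le f hr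

theorem essSup_sq_mul_secondMoment_ge_general (q : ℝ → ℝ) (hq : Measurable q) :
    (essSup (fun x => ENNReal.ofReal (q x)) volume) ^ 2
      * ∫⁻ x, ENNReal.ofReal (x ^ 2 * q x)
      ≥ (∫⁻ x, ENNReal.ofReal (q x)) ^ 3 / 12 := by
  simp_rw [ENNReal.ofReal_mul (sq_nonneg _)]
  exact lintegral_pow_three_div_twelve_le hq.ennreal_ofReal.aemeasurable

/-- For any non-negative Borel measurable function `q` on the real line,
`(ess sup q)² · ∫ x² q(x) dx ≥ (1/12) (∫ q(x) dx)³`. -/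
theorem essSup_sq_mul_secondMoment_ge (q : ℝ → ℝ) (hq : Measurable q)
    (hq0 : ∀ x, 0 ≤ q x) :
    (essSup (fun x => ENNReal.ofReal (q x)) volume) ^ 2
      * ∫⁻ x, ENNReal.ofReal (x ^ 2 * q x)
      ≥ (∫⁻ x, ENNReal.ofReal (q x)) ^ 3 / 12 :=
  essSup_sq_mul_secondMoment_ge_general q hq
end

section
/- There exists an absolute constant c > 0 such that for any real random variable X with standard deviation σ > 0 and finite maximum of density M, its characteristic function satisfies |f(t)| ≤ 1 − (c/(M²σ²)) · min{σ²t², 1} for all real t. -/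
/-!
Rotate the characteristic function: `|f(t)| = ∫ cos(tx + β) p(x) dx` for some phase `β`, so it
suffices to bound `∫ (1 - cos(tx + β)) p` from below. By Chebyshev, at least `3/4` of the mass lies
in `W = [μ - 2σ, μ + 2σ]`. The points of `W` where `tx + β` is within `δ` of `2πℤ` lie in
`O(σ|t| + 1)` intervals of length `2δ/|t|`, so for `δ ≍ min(1/σ, |t|)/M` the bound `p ≤ M` gives
them mass at most `1/4`. On the remaining half of the mass `1 - cos(tx + β) ≥ δ²/8`.
The same Chebyshev-versus-`p ≤ M` comparison on `[μ - 1/(3M), μ + 1/(3M)]` gives `M²σ² ≥ 1/27`,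
which keeps `δ ≤ 1`.
-/

open MeasureTheory Real Set
open scoped ENNReal

namespace Real

lemma cos_le_one_sub_sq_div_eight {x : ℝ} (hx : |x| ≤ π) : cos x ≤ 1 - x ^ 2 / 8 := by
  have h := cos_le_one_sub_mul_cos_sq hx
  have hπ : π ^ 2 ≤ 16 := by nlinarith [pi_pos, pi_le_four]
  have : 1 / 8 ≤ 2 / π ^ 2 := by rw [div_le_div_iff₀ (by norm_num) (by positivity)]; linarith
  nlinarith [sq_nonneg x]

lemma exists_abs_sub_two_pi_mul_lt_of_cos_lt {θ δ : ℝ} (hδ : 0 ≤ δ) (h : cos δ < cos θ) :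
    ∃ k : ℤ, |θ - 2 * π * k| < δ := by
  set k := round (θ / (2 * π))
  refine ⟨k, not_le.1 fun hk => h.not_ge ?_⟩
  have hθk : |θ - 2 * π * k| ≤ π := by
    have h2π : 0 < 2 * π := by positivity
    have hround := abs_sub_round (θ / (2 * π))
    rw [show θ - 2 * π * k = (θ / (2 * π) - k) * (2 * π) by field_simp, abs_mul,
      abs_of_pos h2π]
    nlinarith
  calc cos θ = cos |θ - 2 * π * k| := by
        rw [cos_abs, ← cos_sub_int_mul_two_pi θ k, mul_comm (k : ℝ)]
    _ ≤ cos δ := cos_le_cos_of_nonneg_of_le_pi hδ hθk hk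

end Real

lemma min_sq_mul_sq_one_eq {σ : ℝ} (hσ : 0 < σ) (t : ℝ) :
    min (σ ^ 2 * t ^ 2) 1 = σ ^ 2 * min σ⁻¹ |t| ^ 2 := by
  rw [← sq_abs t]
  rcases le_total σ⁻¹ |t| with h | h
  · have : 1 ≤ σ * |t| := (mul_inv_cancel₀ hσ.ne').symm.le.trans (by gcongr)
    rw [min_eq_left h, min_eq_right (by nlinarith)]
    field_simp
  · have : σ * |t| ≤ 1 := (mul_le_mul_of_nonneg_left h hσ.le).trans (mul_inv_cancel₀ hσ.ne').le
    rw [min_eq_right h, min_eq_left (by nlinarith [mul_nonneg hσ.le (abs_nonneg t)])]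

lemma Int.card_Icc_ceil_floor_le {a b : ℝ} (h : a ≤ b) :
    ((Finset.Icc ⌈a⌉ ⌊b⌋).card : ℝ) ≤ b - a + 1 := by
  rcases le_or_gt ⌈a⌉ (⌊b⌋ + 1) with hle | hlt
  · have := Int.card_Icc_of_le _ _ hle
    have hfl := Int.floor_le b
    have hce := Int.le_ceil a
    rw [← Int.cast_natCast, this]
    push_cast
    linarith
  · rw [Int.card_Icc, Int.toNat_of_nonpos (by omega)]
    push_cast
    linarith

lemma volume_real_setOf_cos_lt_le {t : ℝ} (ht : t ≠ 0) (β m : ℝ) {r δ : ℝ} (hr : 0 ≤ r)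
    (hδ : 0 ≤ δ) :
    volume.real {x ∈ Icc (m - r) (m + r) | cos δ < cos (t * x + β)} ≤
      2 * δ / |t| * ((|t| * r + δ) / π + 1) := by
  set ρ := |t| * r + δ
  set a := (t * m + β - ρ) / (2 * π)
  set b := (t * m + β + ρ) / (2 * π)
  have h2π : 0 < 2 * π := by positivity
  have hcover : {x ∈ Icc (m - r) (m + r) | cos δ < cos (t * x + β)} ⊆
      ⋃ k ∈ Finset.Icc ⌈a⌉ ⌊b⌋, Metric.closedBall ((2 * π * k - β) / t) (δ / |t|) := by
    rintro x ⟨hx, hcos⟩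
    obtain ⟨k, hk⟩ := exists_abs_sub_two_pi_mul_lt_of_cos_lt hδ hcos
    have hxm : |t * x - t * m| ≤ |t| * r := by
      rw [← mul_sub, abs_mul]
      exact mul_le_mul_of_nonneg_left (abs_sub_le_iff.2 ⟨by linarith [hx.2], by linarith [hx.1]⟩)
        (abs_nonneg t)
    have hkm : |2 * π * k - (t * m + β)| ≤ ρ := by
      calc |2 * π * k - (t * m + β)| = |(t * x - t * m) - (t * x + β - 2 * π * k)| := by
            ring_nf
        _ ≤ |t * x - t * m| + |t * x + β - 2 * π * k| := abs_sub _ _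
        _ ≤ ρ := by linarith
    simp only [mem_iUnion, Finset.mem_Icc, Metric.mem_closedBall, Real.dist_eq, exists_prop]
    refine ⟨k, ⟨?_, ?_⟩, ?_⟩
    · rw [Int.ceil_le, div_le_iff₀ h2π]
      linarith [(abs_le.1 hkm).1]
    · rw [Int.le_floor, le_div_iff₀ h2π]
      linarith [(abs_le.1 hkm).2]
    · rw [show x - (2 * π * k - β) / t = (t * x + β - 2 * π * k) / t by field_simp; ring,
        abs_div]
      exact div_le_div_of_nonneg_right hk.le (abs_nonneg t)
  calc volume.real {x ∈ Icc (m - r) (m + r) | cos δ < cos (t * x + β)}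
      ≤ volume.real (⋃ k ∈ Finset.Icc ⌈a⌉ ⌊b⌋,
          Metric.closedBall ((2 * π * k - β) / t) (δ / |t|)) :=
        measureReal_mono hcover
          (measure_biUnion_lt_top (Finset.finite_toSet _) fun _ _ => measure_closedBall_lt_top).ne
    _ ≤ ∑ k ∈ Finset.Icc ⌈a⌉ ⌊b⌋, volume.real (Metric.closedBall ((2 * π * k - β) / t) (δ / |t|)) :=
        measureReal_biUnion_finset_le _ _
    _ = (Finset.Icc ⌈a⌉ ⌊b⌋).card * (2 * (δ / |t|)) := by
        simp [Real.volume_real_closedBall (div_nonneg hδ (abs_nonneg t))]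
    _ ≤ (b - a + 1) * (2 * (δ / |t|)) := by
        have hρ : 0 ≤ ρ := by positivity
        exact mul_le_mul_of_nonneg_right
          (Int.card_Icc_ceil_floor_le (div_le_div_of_nonneg_right (by linarith) h2π.le))
          (by positivity)
    _ = 2 * δ / |t| * (ρ / π + 1) := by
        simp only [a, b]
        field_simp
        ring

section

variable {α : Type*} [MeasurableSpace α] {μ : Measure α} {p : α → ℝ} {M : ℝ}

lemma pos_of_ae_le_of_integral_eq_one (h1 : ∫ x, p x ∂μ = 1) (hM : ∀ᵐ x ∂μ, p x ≤ M) :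
    0 < M := by
  by_contra! hM0
  have := integral_nonpos_of_ae (hM.mono fun x hx => hx.trans hM0)
  linarith

lemma setIntegral_le_mul_measureReal (h0 : ∀ᵐ x ∂μ, 0 ≤ p x) (hM : ∀ᵐ x ∂μ, p x ≤ M)
    {s : Set α} (hs : μ s < ∞) : ∫ x in s, p x ∂μ ≤ M * μ.real s :=
  (Real.le_norm_self _).trans <| norm_setIntegral_le_of_norm_le_const_ae hs <|
    ae_restrict_of_ae <| by
      filter_upwards [h0, hM] with x hx0 hxM
      rwa [Real.norm_of_nonneg hx0]

lemma exists_norm_integral_exp_mul_I_eq_integral_cos {φ : α → ℝ}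
    (hf : Integrable (fun x => Complex.exp (φ x * Complex.I) * (p x : ℂ)) μ) :
    ∃ β : ℝ, ‖∫ x, Complex.exp (φ x * Complex.I) * (p x : ℂ) ∂μ‖ = ∫ x, cos (φ x + β) * p x ∂μ := by
  set z := ∫ x, Complex.exp (φ x * Complex.I) * (p x : ℂ) ∂μ
  refine ⟨-Complex.arg z, ?_⟩
  have hz : Complex.exp (↑(-Complex.arg z) * Complex.I) * z = ‖z‖ := by
    conv_lhs => rw [← Complex.norm_mul_exp_arg_mul_I z]
    rw [mul_left_comm, ← Complex.exp_add]
    push_cast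
    simp
  calc ‖z‖ = RCLike.re (Complex.exp (↑(-Complex.arg z) * Complex.I) * z) := by
        rw [hz]; rfl
    _ = ∫ x, RCLike.re (Complex.exp (↑(-Complex.arg z) * Complex.I) *
          (Complex.exp (φ x * Complex.I) * (p x : ℂ))) ∂μ := by
        rw [integral_re (hf.const_mul _), integral_const_mul]
    _ = ∫ x, cos (φ x + -Complex.arg z) * p x ∂μ := by
        congr 1 with x
        rw [← mul_assoc, ← Complex.exp_add, ← add_mul, ← Complex.ofReal_add, add_comm,
          RCLike.re_to_complex, Complex.re_mul_ofReal, Complex.exp_ofReal_mul_I_re]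

end

section

variable {p : ℝ → ℝ}

lemma one_sub_div_sq_le_setIntegral_Icc (h0 : ∀ x, 0 ≤ p x) (h1 : ∫ x, p x = 1) {m a : ℝ}
    (ha : 0 < a) (h2 : Integrable fun x => (x - m) ^ 2 * p x) :
    1 - (∫ x, (x - m) ^ 2 * p x) / a ^ 2 ≤ ∫ x in Icc (m - a) (m + a), p x := by
  have hp := integrable_of_integral_eq_one h1
  have htail : ∫ x in (Icc (m - a) (m + a))ᶜ, p x ≤ (∫ x, (x - m) ^ 2 * p x) / a ^ 2 := by
    calc ∫ x in (Icc (m - a) (m + a))ᶜ, p x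
        ≤ ∫ x in (Icc (m - a) (m + a))ᶜ, (x - m) ^ 2 * p x / a ^ 2 := by
          refine setIntegral_mono_on hp.integrableOn (h2.div_const _).integrableOn
            measurableSet_Icc.compl fun x hx => ?_
          have hxm : a ≤ |x - m| := by
            simp only [mem_compl_iff, mem_Icc, not_and_or, not_le] at hx
            rcases hx with hx | hx
            · rw [abs_of_neg (by linarith)]; linarith
            · rw [abs_of_pos (by linarith)]; linarith
          rw [le_div_iff₀ (by positivity), ← sq_abs (x - m)]
          nlinarith [mul_le_mul_of_nonneg_right (pow_le_pow_left₀ ha.le hxm 2) (h0 x)]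
      _ ≤ ∫ x, (x - m) ^ 2 * p x / a ^ 2 :=
          setIntegral_le_integral (h2.div_const _) (ae_of_all _ fun x => by
            have := h0 x; positivity)
      _ = (∫ x, (x - m) ^ 2 * p x) / a ^ 2 := integral_div _ _
  have := integral_add_compl (measurableSet_Icc (a := m - a) (b := m + a)) hp
  linarith

lemma one_div_27_le_sq_mul_sq (h0 : ∀ x, 0 ≤ p x) (h1 : ∫ x, p x = 1) {m σ M : ℝ}
    (hvar : σ ^ 2 = ∫ x, (x - m) ^ 2 * p x) (h2 : Integrable fun x => (x - m) ^ 2 * p x)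
    (hM : ∀ᵐ x, p x ≤ M) : 1 / 27 ≤ M ^ 2 * σ ^ 2 := by
  have hM0 := pos_of_ae_le_of_integral_eq_one h1 hM
  set a := 1 / (3 * M)
  have ha : 0 < a := by positivity
  have hmass := one_sub_div_sq_le_setIntegral_Icc h0 h1 ha h2
  have hvol := setIntegral_le_mul_measureReal (ae_of_all _ h0) hM
    (measure_Icc_lt_top (a := m - a) (b := m + a))
  rw [Real.volume_real_Icc_of_le (by linarith), ← hvar] at *
  have e1 : M * (m + a - (m - a)) = 2 / 3 := by simp only [a]; field_simp; ring
  have e2 : σ ^ 2 / a ^ 2 = 9 * (M ^ 2 * σ ^ 2) := by simp only [a]; field_simp; ring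
  linarith

lemma setIntegral_setOf_cos_lt_le (h0 : ∀ x, 0 ≤ p x) {M : ℝ}
    (hM : ∀ᵐ x, p x ≤ M) (hM0 : 0 < M) {σ δ t : ℝ} (β m : ℝ) (hσ : 0 ≤ σ) (hδ : 0 < δ)
    (hδ1 : δ ≤ 1) (hδt : 20 * M * δ ≤ |t|) (hδσ : 20 * M * σ * δ ≤ 1) :
    ∫ x in {x ∈ Icc (m - 2 * σ) (m + 2 * σ) | cos δ < cos (t * x + β)}, p x ≤ 1 / 4 := by
  have ht : 0 < |t| := (by positivity : 0 < 20 * M * δ).trans_le hδt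
  have hMδt : M * δ / |t| ≤ 1 / 20 := by rw [div_le_iff₀ ht]; linarith
  have hvol := volume_real_setOf_cos_lt_le (abs_pos.1 ht) β m (r := 2 * σ) (by positivity) hδ.le
  calc ∫ x in {x ∈ Icc (m - 2 * σ) (m + 2 * σ) | cos δ < cos (t * x + β)}, p x
      ≤ M * volume.real {x ∈ Icc (m - 2 * σ) (m + 2 * σ) | cos δ < cos (t * x + β)} :=
        setIntegral_le_mul_measureReal (ae_of_all _ h0) hM
          ((measure_mono (sep_subset _ _)).trans_lt measure_Icc_lt_top)
    _ ≤ M * (2 * δ / |t| * ((|t| * (2 * σ) + δ) / π + 1)) :=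
        mul_le_mul_of_nonneg_left hvol hM0.le
    _ = (4 * (M * σ * δ) + 2 * (M * δ / |t|) * δ) / π + 2 * (M * δ / |t|) := by
        field_simp
        ring
    _ ≤ 1 / 4 := by
        have : (4 * (M * σ * δ) + 2 * (M * δ / |t|) * δ) / π ≤ 1 / 10 := by
          rw [div_le_iff₀ pi_pos]
          nlinarith [pi_gt_three]
        linarith

lemma integral_cos_mul_le_one_sub_sq (h0 : ∀ x, 0 ≤ p x) (h1 : ∫ x, p x = 1)
    {m σ M δ t : ℝ} (β : ℝ) (hσ : 0 < σ) (hvar : σ ^ 2 = ∫ x, (x - m) ^ 2 * p x)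
    (h2 : Integrable fun x => (x - m) ^ 2 * p x) (hM : ∀ᵐ x, p x ≤ M) (hδ : 0 < δ)
    (hδ1 : δ ≤ 1) (hδt : 20 * M * δ ≤ |t|) (hδσ : 20 * M * σ * δ ≤ 1) :
    ∫ x, cos (t * x + β) * p x ≤ 1 - δ ^ 2 / 16 := by
  have hp := integrable_of_integral_eq_one h1
  set W := Icc (m - 2 * σ) (m + 2 * σ)
  set N := {x ∈ W | cos δ < cos (t * x + β)}
  have hNW : N ⊆ W := sep_subset _ _
  have hN : MeasurableSet N :=
    measurableSet_Icc.inter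
      (measurableSet_lt (g := fun x => cos (t * x + β)) measurable_const (by fun_prop))
  have hmassW : 3 / 4 ≤ ∫ x in W, p x := by
    have := one_sub_div_sq_le_setIntegral_Icc h0 h1 (a := 2 * σ) (by positivity) h2
    rw [← hvar, show σ ^ 2 / (2 * σ) ^ 2 = 1 / 4 by field_simp; norm_num] at this
    linarith
  have hmassN := setIntegral_setOf_cos_lt_le h0 hM (pos_of_ae_le_of_integral_eq_one h1 hM) β m
    hσ.le hδ hδ1 hδt hδσ
  have hcos : ∀ x ∈ W \ N, δ ^ 2 / 8 ≤ 1 - cos (t * x + β) := by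
    rintro x ⟨hxW, hxN⟩
    have hle : cos (t * x + β) ≤ cos δ := not_lt.1 fun h => hxN ⟨hxW, h⟩
    have := cos_le_one_sub_sq_div_eight (x := δ)
      (abs_le.2 ⟨by linarith [pi_gt_three], by linarith [pi_gt_three]⟩)
    linarith
  have hint : Integrable fun x => (1 - cos (t * x + β)) * p x :=
    hp.bdd_mul (c := 2) (by fun_prop) (ae_of_all _ fun x => by
      rw [Real.norm_eq_abs, abs_le]
      constructor <;> linarith [neg_one_le_cos (t * x + β), cos_le_one (t * x + β)])
  have hgap : δ ^ 2 / 16 ≤ ∫ x, (1 - cos (t * x + β)) * p x :=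
    calc δ ^ 2 / 16 ≤ δ ^ 2 / 8 * ∫ x in W \ N, p x := by
          rw [setIntegral_sdiff hN hp.integrableOn hNW]; nlinarith
      _ = ∫ x in W \ N, δ ^ 2 / 8 * p x := (integral_const_mul _ _).symm
      _ ≤ ∫ x in W \ N, (1 - cos (t * x + β)) * p x :=
          setIntegral_mono_on (hp.integrableOn.const_mul _) hint.integrableOn
            (measurableSet_Icc.diff hN) fun x hx => mul_le_mul_of_nonneg_right (hcos x hx) (h0 x)
      _ ≤ ∫ x, (1 - cos (t * x + β)) * p x :=
          setIntegral_le_integral hint (ae_of_all _ fun x =>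
            mul_nonneg (sub_nonneg.2 (cos_le_one _)) (h0 x))
  have hsplit : ∫ x, cos (t * x + β) * p x = ∫ x, (p x - (1 - cos (t * x + β)) * p x) := by
    congr 1 with x; ring
  rw [hsplit, integral_sub hp hint, h1]
  linarith

lemma integral_cos_mul_le_one_sub_min (h0 : ∀ x, 0 ≤ p x) (h1 : ∫ x, p x = 1)
    {m σ M : ℝ} (t β : ℝ) (hσ : 0 < σ) (hvar : σ ^ 2 = ∫ x, (x - m) ^ 2 * p x)
    (h2 : Integrable fun x => (x - m) ^ 2 * p x) (hM : ∀ᵐ x, p x ≤ M) :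
    ∫ x, cos (t * x + β) * p x ≤ 1 - 1 / 6400 / (M ^ 2 * σ ^ 2) * min (σ ^ 2 * t ^ 2) 1 := by
  rcases eq_or_ne t 0 with rfl | ht
  · simp [integral_const_mul, h1, cos_le_one]
  have hM0 := pos_of_ae_le_of_integral_eq_one h1 hM
  have hMσ := one_div_27_le_sq_mul_sq h0 h1 hvar h2 hM
  set δ := min σ⁻¹ |t| / (20 * M)
  have hδ : 0 < δ := by positivity
  have h20 : 20 * M * δ = min σ⁻¹ |t| := by simp only [δ]; field_simp
  have hδt : 20 * M * δ ≤ |t| := h20 ▸ min_le_right _ _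
  have hδσ : 20 * M * σ * δ ≤ 1 := by
    rw [mul_right_comm, h20, ← inv_mul_cancel₀ hσ.ne']
    exact mul_le_mul_of_nonneg_right (min_le_left _ _) hσ.le
  have hδ1 : δ ≤ 1 := by
    by_contra! hδ1
    have : M * σ < 1 / 20 := by nlinarith [mul_pos hM0 hσ]
    nlinarith [mul_pos hM0 hσ]
  have hδsq : 1 / 6400 / (M ^ 2 * σ ^ 2) * min (σ ^ 2 * t ^ 2) 1 = δ ^ 2 / 16 := by
    rw [min_sq_mul_sq_one_eq hσ, ← h20]
    field_simp
    ring
  rw [hδsq]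
  exact integral_cos_mul_le_one_sub_sq h0 h1 β hσ hvar h2 hM hδ hδ1 hδt hδσ

end

/-- Statuljavičus separation theorem: there is an absolute constant `c > 0` such that
for any real random variable with density `p`, standard deviation `σ > 0` and finite
maximum of density `M`, the characteristic function satisfies
`|f(t)| ≤ 1 − (c/(M²σ²)) · min{σ²t², 1}` for all real `t`. -/
theorem statulevicius_separation :
    ∃ c : ℝ, 0 < c ∧
      ∀ (p : ℝ → ℝ), Measurable p → (∀ x, 0 ≤ p x) → (∫ x, p x) = 1 →
      ∀ (μ σ M : ℝ), 0 < σ →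
      μ = (∫ x, x * p x) →
      σ ^ 2 = (∫ x, (x - μ) ^ 2 * p x) →
      Integrable (fun x => x * p x) →
      Integrable (fun x => (x - μ) ^ 2 * p x) →
      essSup p volume = M → (∀ᵐ x ∂volume, p x ≤ M) →
      ∀ t : ℝ,
        ‖∫ x, Complex.exp ((t * x : ℝ) * Complex.I) * (p x : ℂ)‖
          ≤ 1 - c / (M ^ 2 * σ ^ 2) * min (σ ^ 2 * t ^ 2) 1 := by
  refine ⟨1 / 6400, by norm_num, fun p _ h0 h1 μ σ M hσ _ hvar _ h2 _ hM t => ?_⟩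
  obtain ⟨β, hβ⟩ := exists_norm_integral_exp_mul_I_eq_integral_cos (φ := fun x => t * x) (p := p)
    ((integrable_of_integral_eq_one h1).ofReal.bdd_mul (c := 1) (by fun_prop)
      (ae_of_all _ fun x => (Complex.norm_exp_ofReal_mul_I _).le))
  exact hβ ▸ integral_cos_mul_le_one_sub_min h0 h1 t β hσ hvar h2 hM
end

section
/- Let X be a random vector in ℝ^d with density p and characteristic function g(t) = E[e^{i⟨t,X⟩}]. For r > 0 with b_r = P(|X| < r) ≥ 1/2, let X_r have the truncated density p_r(x) = (1/b_r) p(x) 1_{|x|<r} with characteristic function g_r. Then for all t ∈ ℝ^d, 1 − |g(t)|² ≥ (1/2)(1 − |g_r(t)|²). -/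
open MeasureTheory

/-! Splitting the integral defining `g` along `{|x| < r}` gives `g = b gᵣ + h` with
`|h| ≤ P(|X| ≥ r) = 1 - b`, so `|g| ≤ 1 - b (1 - |gᵣ|)`. Then
`1 - |g|² ≥ b u (2 - b u)` with `u = 1 - |gᵣ| ∈ [0, 1]`; as `b u ≤ 1` this increases in `b`,
so `b ≥ 1/2` bounds it below by `(u/2)(2 - u/2) ≥ (1/2)(1 - |gᵣ|²)`. -/

lemma one_sub_sq_ge_half_of_le_convex_comb {a b s : ℝ} (hb : 1 / 2 ≤ b) (hb1 : b ≤ 1)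
    (hs0 : 0 ≤ s) (hs1 : s ≤ 1) (ha0 : 0 ≤ a) (ha : a ≤ b * s + (1 - b)) :
    1 - a ^ 2 ≥ (1 / 2) * (1 - s ^ 2) := by
  have hsq : a ^ 2 ≤ (b * s + (1 - b)) ^ 2 := pow_le_pow_left₀ ha0 ha 2
  nlinarith [mul_nonneg (mul_nonneg (by linarith : (0 : ℝ) ≤ b) (sub_nonneg.2 hs1))
    (sub_nonneg.2 hb1), mul_nonneg (sub_nonneg.2 hs1) hs0,
    mul_nonneg (sub_nonneg.2 hb) (mul_nonneg (sub_nonneg.2 hs1) (sub_nonneg.2 hs1))]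

lemma norm_integral_le_norm_setIntegral_add_integral_compl_norm {α E : Type*}
    [MeasurableSpace α] [NormedAddCommGroup E] [NormedSpace ℝ E] {μ : Measure α}
    {f : α → E} {S : Set α} (hS : MeasurableSet S) (hf : Integrable f μ) :
    ‖∫ x, f x ∂μ‖ ≤ ‖∫ x in S, f x ∂μ‖ + ∫ x in Sᶜ, ‖f x‖ ∂μ :=
  calc ‖∫ x, f x ∂μ‖ = ‖(∫ x in S, f x ∂μ) + ∫ x in Sᶜ, f x ∂μ‖ := by
        rw [integral_add_compl hS hf]
    _ ≤ ‖∫ x in S, f x ∂μ‖ + ‖∫ x in Sᶜ, f x ∂μ‖ := norm_add_le _ _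
    _ ≤ ‖∫ x in S, f x ∂μ‖ + ∫ x in Sᶜ, ‖f x‖ ∂μ := by
        gcongr; exact norm_integral_le_integral_norm _

section Fourier

variable {E : Type*} [NormedAddCommGroup E] [InnerProductSpace ℝ E]

lemma norm_exp_inner_mul_I_mul_ofReal (t x : E) {c : ℝ} (hc : 0 ≤ c) :
    ‖Complex.exp ((inner ℝ t x : ℝ) * Complex.I) * (c : ℂ)‖ = c := by
  rw [norm_mul, Complex.norm_exp_ofReal_mul_I, one_mul, Complex.norm_real, Real.norm_eq_abs,
    abs_of_nonneg hc]

lemma MeasureTheory.Integrable.exp_inner_mul_I_mul_ofReal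
    [MeasurableSpace E] [OpensMeasurableSpace E]
    {μ : Measure E} {p : E → ℝ} (hp : Integrable p μ) (t : E) :
    Integrable (fun x => Complex.exp ((inner ℝ t x : ℝ) * Complex.I) * (p x : ℂ)) μ := by
  refine Integrable.bdd_mul (c := 1) hp.ofReal ?_ (ae_of_all _ fun x => ?_)
  · exact (by fun_prop : Continuous fun x : E =>
      Complex.exp ((inner ℝ t x : ℝ) * Complex.I)).aestronglyMeasurable
  · rw [Complex.norm_exp_ofReal_mul_I]

end Fourier

theorem truncation_charFun_bound_general (d : ℕ)
    (p : EuclideanSpace ℝ (Fin d) → ℝ)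
    (hp0 : ∀ x, 0 ≤ p x) (hp1 : ∫ x, p x = 1)
    (r b : ℝ)
    (hb : b = ∫ x in {x : EuclideanSpace ℝ (Fin d) | ‖x‖ < r}, p x)
    (hb2 : 1 / 2 ≤ b)
    (g gr : EuclideanSpace ℝ (Fin d) → ℂ)
    (hg : ∀ t, g t = ∫ x, Complex.exp ((inner ℝ t x : ℝ) * Complex.I) * (p x : ℂ))
    (hgr : ∀ t, gr t = (b : ℂ)⁻¹ *
      ∫ x in {x : EuclideanSpace ℝ (Fin d) | ‖x‖ < r},
        Complex.exp ((inner ℝ t x : ℝ) * Complex.I) * (p x : ℂ)) :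
    ∀ t, 1 - ‖g t‖ ^ 2 ≥ (1 / 2) * (1 - ‖gr t‖ ^ 2) := by
  intro t
  set S := {x : EuclideanSpace ℝ (Fin d) | ‖x‖ < r}
  set φ := fun x => Complex.exp ((inner ℝ t x : ℝ) * Complex.I) * (p x : ℂ)
  have hS : MeasurableSet S := (isOpen_lt continuous_norm continuous_const).measurableSet
  have hpInt : Integrable p := .of_integral_ne_zero (by rw [hp1]; exact one_ne_zero)
  have hpS : ∫ x in Sᶜ, p x = 1 - b := by
    rw [hb, ← hp1, ← integral_add_compl hS hpInt]; ring
  have hb1 : b ≤ 1 := by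
    linarith [setIntegral_nonneg (μ := volume) hS.compl fun x _ => hp0 x]
  have hφ x : ‖φ x‖ = p x := norm_exp_inner_mul_I_mul_ofReal t x (hp0 x)
  have hφS : ‖∫ x in S, φ x‖ = b * ‖gr t‖ := by
    have hI : ∫ x in S, φ x = b * gr t := by
      rw [hgr t, ← mul_assoc, mul_inv_cancel₀ (by exact_mod_cast (by linarith : b ≠ 0)),
        one_mul]
    rw [hI, norm_mul, Complex.norm_real, Real.norm_of_nonneg (by linarith)]
  have hgr1 : ‖gr t‖ ≤ 1 := by
    have : b * ‖gr t‖ ≤ b * 1 := calc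
      b * ‖gr t‖ = ‖∫ x in S, φ x‖ := hφS.symm
      _ ≤ ∫ x in S, ‖φ x‖ := norm_integral_le_integral_norm _
      _ = b * 1 := by simp only [hφ, hb, mul_one]
    exact le_of_mul_le_mul_left this (by linarith)
  have hg_le : ‖g t‖ ≤ b * ‖gr t‖ + (1 - b) := calc
    ‖g t‖ = ‖∫ x, φ x‖ := by rw [hg]
    _ ≤ ‖∫ x in S, φ x‖ + ∫ x in Sᶜ, ‖φ x‖ :=
      norm_integral_le_norm_setIntegral_add_integral_compl_norm hS
        (hpInt.exp_inner_mul_I_mul_ofReal t)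
    _ = b * ‖gr t‖ + (1 - b) := by simp only [hφS, hφ, hpS]
  exact one_sub_sq_ge_half_of_le_convex_comb hb2 hb1 (norm_nonneg _) hgr1 (norm_nonneg _) hg_le

/-- If `X` has density `p` on `ℝ^d` with characteristic function `g`, and `X_r` has the
truncated density `p_r = b_r⁻¹ p 1_{|x|<r}` with characteristic function `g_r`, where
`b_r = P(|X| < r) ≥ 1/2`, then `1 − |g(t)|² ≥ (1/2)(1 − |g_r(t)|²)`. -/
theorem truncation_charFun_bound (d : ℕ)
    (p : EuclideanSpace ℝ (Fin d) → ℝ) (hp : Measurable p)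
    (hp0 : ∀ x, 0 ≤ p x) (hp1 : ∫ x, p x = 1)
    (r b : ℝ) (hr : 0 < r)
    (hb : b = ∫ x in {x : EuclideanSpace ℝ (Fin d) | ‖x‖ < r}, p x)
    (hb2 : 1 / 2 ≤ b)
    (g gr : EuclideanSpace ℝ (Fin d) → ℂ)
    (hg : ∀ t, g t = ∫ x, Complex.exp ((inner ℝ t x : ℝ) * Complex.I) * (p x : ℂ))
    (hgr : ∀ t, gr t = (b : ℂ)⁻¹ *
      ∫ x in {x : EuclideanSpace ℝ (Fin d) | ‖x‖ < r},
        Complex.exp ((inner ℝ t x : ℝ) * Complex.I) * (p x : ℂ)) :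
    ∀ t, 1 - ‖g t‖ ^ 2 ≥ (1 / 2) * (1 - ‖gr t‖ ^ 2) :=
  truncation_charFun_bound_general d p hp0 hp1 r b hb hb2 g gr hg hgr
end

section
/- If X is a random vector in ℝ^d (d ≥ 2) with density p bounded by M, r > 0, and b_r = P(|X| < r) ≥ 1/2, then for every unit vector θ the random variable ⟨θ, X_r⟩ (where X_r has the truncated density p_r) has a density bounded by 2 ω_{d−1} r^{d−1} M, where ω_{d−1} is the volume of the unit ball in ℝ^{d−1}. -/
/-!
On the ball of radius `r` the truncated density is `b⁻¹ p ≤ 2M`, and it vanishes outside.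
Splitting `ℝ^d` isometrically as `ℝθ ⊕ θᗮ`, the points of the ball with `⟨θ, x⟩ ∈ s`
lie in `s × (ball of radius r in θᗮ)`, a set of volume `|s| ω_{d-1} r^{d-1}`.
-/

open MeasureTheory Metric

theorem map_withDensity_le_smul_of_le_indicator {α β : Type*} [MeasurableSpace α]
    [MeasurableSpace β] {μ : Measure α} {ν : Measure β} {f : α → β} (hf : Measurable f)
    {g : α → ENNReal} {K : Set α} (hK : MeasurableSet K) {c C : ENNReal}
    (hg : ∀ x, g x ≤ K.indicator (fun _ => c) x)
    (hfK : ∀ s, MeasurableSet s → μ (f ⁻¹' s ∩ K) ≤ C * ν s) :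
    (μ.withDensity g).map f ≤ (c * C) • ν := by
  refine Measure.le_iff.2 fun s hs => ?_
  rw [Measure.map_apply hf hs, withDensity_apply _ (hf hs), Measure.smul_apply, smul_eq_mul]
  calc ∫⁻ x in f ⁻¹' s, g x ∂μ
      ≤ ∫⁻ x in f ⁻¹' s, K.indicator (fun _ => c) x ∂μ := lintegral_mono hg
    _ = c * μ (f ⁻¹' s ∩ K) := by
        rw [lintegral_indicator_const hK, Measure.restrict_apply hK, Set.inter_comm]
    _ ≤ c * (C * ν s) := by gcongr; exact hfK s hs
    _ = c * C * ν s := (mul_assoc _ _ _).symm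

theorem ofReal_inv_mul_indicator_le {α : Type*} {p : α → ℝ} {K : Set α} {M b : ℝ}
    (hp0 : ∀ x, 0 ≤ p x) (hpM : ∀ x, p x ≤ M) (hb : 1 / 2 ≤ b) (x : α) :
    ENNReal.ofReal (b⁻¹ * K.indicator p x) ≤
      K.indicator (fun _ => ENNReal.ofReal (2 * M)) x := by
  by_cases hx : x ∈ K
  · rw [Set.indicator_of_mem hx, Set.indicator_of_mem hx]
    have hbinv : b⁻¹ ≤ 2 := by simpa using inv_anti₀ (by norm_num) hb
    refine ENNReal.ofReal_le_ofReal ?_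
    calc b⁻¹ * p x ≤ 2 * p x := mul_le_mul_of_nonneg_right hbinv (hp0 x)
      _ ≤ 2 * M := by gcongr; exact hpM x
  · simp [Set.indicator_of_notMem hx]

section InnerCoordinate

variable {E : Type*} [NormedAddCommGroup E] [InnerProductSpace ℝ E] {θ : E}

noncomputable def innerOrthogonalDecomposition (θ : E) (hθ : ‖θ‖ = 1) :
    E ≃ₗᵢ[ℝ] WithLp 2 (ℝ × (ℝ ∙ θ)ᗮ) :=
  (ℝ ∙ θ).orthogonalDecomposition.trans <| LinearIsometryEquiv.withLpProdCongr 2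
    (LinearIsometryEquiv.toSpanUnitSingleton θ hθ).symm (LinearIsometryEquiv.refl ℝ _)

theorem innerOrthogonalDecomposition_fst (hθ : ‖θ‖ = 1) (x : E) :
    (innerOrthogonalDecomposition θ hθ x).fst = inner ℝ θ x := by
  simpa [innerOrthogonalDecomposition, LinearIsometryEquiv.symm_apply_eq, Subtype.ext_iff]
    using Submodule.starProjection_unit_singleton ℝ hθ x

theorem norm_innerOrthogonalDecomposition_snd_le (hθ : ‖θ‖ = 1) (x : E) :
    ‖(innerOrthogonalDecomposition θ hθ x).snd‖ ≤ ‖x‖ := by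
  have h := WithLp.prod_norm_sq_eq_of_L2 (innerOrthogonalDecomposition θ hθ x)
  rw [LinearIsometryEquiv.norm_map] at h
  nlinarith [sq_nonneg ‖(innerOrthogonalDecomposition θ hθ x).fst‖, norm_nonneg x,
    norm_nonneg (innerOrthogonalDecomposition θ hθ x).snd]

variable [FiniteDimensional ℝ E] [MeasurableSpace E] [BorelSpace E]

theorem volume_inner_mem_inter_ball_le (hθ : ‖θ‖ = 1) (s : Set ℝ) (r : ℝ) :
    volume ({x : E | inner ℝ θ x ∈ s} ∩ ball 0 r) ≤
      volume s * volume (ball (0 : (ℝ ∙ θ)ᗮ) r) := by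
  set e := innerOrthogonalDecomposition θ hθ
  have he : MeasurePreserving (fun x => WithLp.ofLp (e x)) :=
    (WithLp.volume_preserving_ofLp _ _).comp e.measurePreserving
  calc volume ({x : E | inner ℝ θ x ∈ s} ∩ ball 0 r)
      ≤ volume ((fun x => WithLp.ofLp (e x)) ⁻¹' (s ×ˢ ball 0 r)) := by
        refine measure_mono fun x ⟨hxs, hxr⟩ => ⟨?_, ?_⟩
        · simpa [e, innerOrthogonalDecomposition_fst] using hxs
        · have hx : ‖x‖ < r := by simpa using hxr
          simpa using (norm_innerOrthogonalDecomposition_snd_le hθ x).trans_lt hx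
    _ ≤ volume (s ×ˢ ball (0 : (ℝ ∙ θ)ᗮ) r) := he.measure_preimage_le _
    _ = volume s * volume (ball (0 : (ℝ ∙ θ)ᗮ) r) := by
        rw [Measure.volume_eq_prod, Measure.prod_prod]

theorem volume_ball_orthogonal_span_singleton {n : ℕ} [Fact (Module.finrank ℝ E = n + 1)]
    (hn : 0 < n) (hθ : θ ≠ 0) (r : ℝ) :
    volume (ball (0 : (ℝ ∙ θ)ᗮ) r) =
      ENNReal.ofReal r ^ n *
        ENNReal.ofReal (Real.pi ^ ((n : ℝ) / 2) / Real.Gamma (n / 2 + 1)) := by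
  have hrank := Submodule.finrank_orthogonal_span_singleton (𝕜 := ℝ) (n := n) hθ
  have : Nontrivial (ℝ ∙ θ)ᗮ := Module.nontrivial_of_finrank_pos (R := ℝ) (hrank ▸ hn)
  rw [InnerProductSpace.volume_ball, hrank, Real.sqrt_eq_rpow, ← Real.rpow_natCast,
    ← Real.rpow_mul Real.pi_pos.le, one_div_mul_eq_div]

end InnerCoordinate

theorem truncation_marginal_density_bound_general (d : ℕ) (hd : 2 ≤ d)
    (p : EuclideanSpace ℝ (Fin d) → ℝ)
    (hp0 : ∀ x, 0 ≤ p x)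
    (M : ℝ) (hpM : ∀ x, p x ≤ M)
    (r b : ℝ) (hr : 0 < r)
    (hb2 : 1 / 2 ≤ b)
    (pr : EuclideanSpace ℝ (Fin d) → ℝ)
    (hpr : ∀ x, pr x = b⁻¹ * Set.indicator {x : EuclideanSpace ℝ (Fin d) | ‖x‖ < r} p x)
    (θ : EuclideanSpace ℝ (Fin d)) (hθ : ‖θ‖ = 1)
    (ω : ℝ)
    (hω : ω = Real.pi ^ (((d : ℝ) - 1) / 2) / Real.Gamma (((d : ℝ) - 1) / 2 + 1)) :
    Measure.map (fun x => (inner ℝ θ x : ℝ))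
        (volume.withDensity fun x => ENNReal.ofReal (pr x))
      ≤ ENNReal.ofReal (2 * ω * r ^ (d - 1) * M) • volume := by
  obtain ⟨n, rfl⟩ : ∃ n, d = n + 2 := ⟨d - 2, by omega⟩
  have hM : 0 ≤ M := (hp0 0).trans (hpM 0)
  have hdens (x : EuclideanSpace ℝ (Fin (n + 2))) :
      ENNReal.ofReal (pr x) ≤ (ball 0 r).indicator (fun _ => ENNReal.ofReal (2 * M)) x := by
    rw [hpr, ← ball_zero_eq]
    exact ofReal_inv_mul_indicator_le hp0 hpM hb2 x
  have : Fact (Module.finrank ℝ (EuclideanSpace ℝ (Fin (n + 2))) = n + 1 + 1) :=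
    ⟨finrank_euclideanSpace_fin⟩
  refine (map_withDensity_le_smul_of_le_indicator (by fun_prop) measurableSet_ball hdens
    fun s _ => (volume_inner_mem_inter_ball_le hθ s r).trans_eq (mul_comm _ _)).trans_eq ?_
  have hθ0 : θ ≠ 0 := ne_zero_of_norm_ne_zero (by simp [hθ])
  rw [volume_ball_orthogonal_span_singleton (n := n + 1) (by omega) hθ0,
    ← ENNReal.ofReal_pow hr.le, ← ENNReal.ofReal_mul (by positivity),
    ← ENNReal.ofReal_mul (by positivity), hω]
  congr 2
  push_cast
  ring_nf

/-- If `X` has density `p ≤ M` on `ℝ^d` (`d ≥ 2`), and `X_r` has the truncated density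
`p_r = b⁻¹ p 1_{|x|<r}` with `b = P(|X| < r) ≥ 1/2`, then for every unit vector `θ` the
random variable `⟨θ, X_r⟩` has a density bounded by `2 ω_{d−1} r^{d−1} M`, where
`ω_{d−1} = π^{(d−1)/2}/Γ((d−1)/2 + 1)` is the volume of the unit ball in `ℝ^{d−1}`.
(Having a density bounded by `C` is expressed as: the distribution of `⟨θ, X_r⟩` is
dominated by `C` times Lebesgue measure.) -/
theorem truncation_marginal_density_bound (d : ℕ) (hd : 2 ≤ d)
    (p : EuclideanSpace ℝ (Fin d) → ℝ) (hp : Measurable p)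
    (hp0 : ∀ x, 0 ≤ p x) (hp1 : ∫ x, p x = 1)
    (M : ℝ) (hpM : ∀ x, p x ≤ M)
    (r b : ℝ) (hr : 0 < r)
    (hb : b = ∫ x in {x : EuclideanSpace ℝ (Fin d) | ‖x‖ < r}, p x)
    (hb2 : 1 / 2 ≤ b)
    (pr : EuclideanSpace ℝ (Fin d) → ℝ)
    (hpr : ∀ x, pr x = b⁻¹ * Set.indicator {x : EuclideanSpace ℝ (Fin d) | ‖x‖ < r} p x)
    (θ : EuclideanSpace ℝ (Fin d)) (hθ : ‖θ‖ = 1)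
    (ω : ℝ)
    (hω : ω = Real.pi ^ (((d : ℝ) - 1) / 2) / Real.Gamma (((d : ℝ) - 1) / 2 + 1)) :
    Measure.map (fun x => (inner ℝ θ x : ℝ))
        (volume.withDensity fun x => ENNReal.ofReal (pr x))
      ≤ ENNReal.ofReal (2 * ω * r ^ (d - 1) * M) • volume :=
  truncation_marginal_density_bound_general d hd p hp0 M hpM r b hr hb2 pr hpr θ hθ ω hω
end

section
/- Let X_1,…,X_m (m ≥ 2) be independent random vectors in ℝ^d with bounded densities q_k ≤ M_k. Then the characteristic function f of S_m = X_1 + ⋯ + X_m is integrable, with ∫_{ℝ^d} |f(t)| dt ≤ (2π)^d (M_1 ⋯ M_m)^{1/m}. -/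
/-!
Let `v` be the characteristic function of a density `q ≤ M` on a `d`-dimensional space. Damping
`|v|²` by a Gaussian and integrating the Gaussian out first (Fubini),
`∫ e^{-ε|t|²} |v(t)|² dt = (π/ε)^{d/2} ∬ e^{-|x-y|²/4ε} q(x) q(y) dx dy ≤ (2π)^d M`,
because `∫ q = 1` and the inner integral in `y` of the kernel is `(4πε)^{d/2}`; letting `ε → 0`
gives `∫ |v|² ≤ (2π)^d M`. As `|v_k| ≤ 1` and `m ≥ 2`, `∫ |v_k|^m ≤ ∫ |v_k|²`, and Hölder's
inequality with `m` exponents equal to `m` bounds `∫ |v_1 ⋯ v_m|` by `∏ (∫ |v_k|^m)^{1/m}`.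
-/

open MeasureTheory Filter Topology Complex Module
open scoped ENNReal Real RealInnerProductSpace ComplexConjugate

theorem lintegral_prod_mul_kernel_sub_le {G : Type*} [MeasurableSpace G] [AddGroup G]
    [MeasurableAdd G] [MeasurableNeg G] {μ : Measure G} [μ.IsAddLeftInvariant]
    [μ.IsNegInvariant] {K q : G → ℝ≥0∞} (hK : Measurable K) (hq : Measurable q)
    {M : ℝ≥0∞} (hqM : ∀ x, q x ≤ M) :
    ∫⁻ p, K (p.1 - p.2) * q p.1 * q p.2 ∂μ.prod μ ≤ (∫⁻ x, q x ∂μ) * M * ∫⁻ x, K x ∂μ :=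
  calc ∫⁻ p, K (p.1 - p.2) * q p.1 * q p.2 ∂μ.prod μ
      ≤ ∫⁻ x, ∫⁻ y, K (x - y) * q x * q y ∂μ ∂μ := lintegral_prod_le _
    _ ≤ ∫⁻ x, ∫⁻ y, q x * M * K (x - y) ∂μ ∂μ := by
        refine lintegral_mono fun x => lintegral_mono fun y => ?_
        calc K (x - y) * q x * q y ≤ K (x - y) * q x * M := by gcongr; exact hqM y
          _ = q x * M * K (x - y) := by ring
    _ = ∫⁻ x, q x * M * ∫⁻ y, K (x - y) ∂μ ∂μ := by
        refine lintegral_congr fun x => ?_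
        exact lintegral_const_mul _ (hK.comp (measurable_id.const_sub x))
    _ = (∫⁻ x, q x ∂μ) * M * ∫⁻ x, K x ∂μ := by
        simp_rw [lintegral_sub_left_eq_self K]
        rw [lintegral_mul_const _ (hq.mul_const M), lintegral_mul_const _ hq]

theorem lintegral_le_of_forall_gaussian_mul_le {V : Type*} [SeminormedAddCommGroup V]
    [MeasurableSpace V] [OpensMeasurableSpace V] {μ : Measure V} {f : V → ℝ≥0∞}
    (hf : AEMeasurable f μ) {C : ℝ≥0∞}
    (h : ∀ ε : ℝ, 0 < ε → ∫⁻ t, ENNReal.ofReal (Real.exp (-ε * ‖t‖ ^ 2)) * f t ∂μ ≤ C) :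
    ∫⁻ t, f t ∂μ ≤ C := by
  set g : ℕ → V → ℝ≥0∞ := fun n t => ENNReal.ofReal (Real.exp (-(1 / (n + 1)) * ‖t‖ ^ 2))
  have hg_mono : ∀ t, Monotone fun n => g n t := by
    intro t i j hij
    simp only [g]
    gcongr
  have hg_lim : ∀ t, Tendsto (fun n => g n t) atTop (𝓝 1) := by
    intro t
    have h0 : Tendsto (fun n : ℕ => -(1 / ((n : ℝ) + 1)) * ‖t‖ ^ 2) atTop (𝓝 (-0 * ‖t‖ ^ 2)) :=
      tendsto_one_div_add_atTop_nhds_zero_nat.neg.mul_const _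
    simpa [g, Function.comp_def] using
      ((ENNReal.continuous_ofReal.comp Real.continuous_exp).tendsto _).comp h0
  refine le_of_tendsto' (lintegral_tendsto_of_tendsto_of_monotone (fun n => ?_)
    (ae_of_all _ fun t => (hg_mono t).mul_const' _) (ae_of_all _ fun t => ?_))
    fun n => h _ (by positivity)
  · exact (by fun_prop : Measurable (g n)).aemeasurable.mul hf
  · simpa using ENNReal.Tendsto.mul_const (hg_lim t) (Or.inl one_ne_zero)

theorem ENNReal.prod_mul_rpow_inv_card {ι : Type*} [Fintype ι] (hι : Fintype.card ι ≠ 0)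
    (a : ℝ≥0∞) (b : ι → ℝ≥0∞) :
    ∏ i, (a * b i) ^ (Fintype.card ι : ℝ)⁻¹ = a * (∏ i, b i) ^ (Fintype.card ι : ℝ)⁻¹ := by
  have hn : (0 : ℝ) ≤ (Fintype.card ι : ℝ)⁻¹ := by positivity
  simp_rw [ENNReal.mul_rpow_of_nonneg _ _ hn, Finset.prod_mul_distrib, Finset.prod_const,
    Finset.card_univ, ENNReal.prod_rpow_of_nonneg hn, ← ENNReal.rpow_natCast, ← ENNReal.rpow_mul,
    inv_mul_cancel₀ ((Nat.cast_ne_zero (R := ℝ)).2 hι), ENNReal.rpow_one]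

theorem lintegral_enorm_prod_le_prod_lintegral_enorm_sq_rpow {α ι 𝕜 : Type*} [MeasurableSpace α]
    {μ : Measure α} [Fintype ι] [NormedField 𝕜] (hι : 2 ≤ Fintype.card ι) {g : ι → α → 𝕜}
    (hg : ∀ i, AEStronglyMeasurable (g i) μ) (hg1 : ∀ i x, ‖g i x‖ ≤ 1) :
    ∫⁻ x, ‖∏ i, g i x‖ₑ ∂μ ≤ ∏ i, (∫⁻ x, ‖g i x‖ₑ ^ 2 ∂μ) ^ (Fintype.card ι : ℝ)⁻¹ := by
  set m := Fintype.card ι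
  have hm : (m : ℝ) ≠ 0 := by positivity
  calc ∫⁻ x, ‖∏ i, g i x‖ₑ ∂μ = ∫⁻ x, ∏ i, (‖g i x‖ₑ ^ m) ^ (m : ℝ)⁻¹ ∂μ := by
        refine lintegral_congr fun x => ?_
        simp_rw [← ENNReal.rpow_natCast, ← ENNReal.rpow_mul, mul_inv_cancel₀ hm, ENNReal.rpow_one,
          enorm_eq_nnnorm, nnnorm_prod, ENNReal.ofNNReal_finsetProd]
    _ ≤ ∏ i, (∫⁻ x, ‖g i x‖ₑ ^ m ∂μ) ^ (m : ℝ)⁻¹ :=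
        ENNReal.lintegral_prod_norm_pow_le _ (fun i _ => ((hg i).enorm.pow_const m))
          (by simp [m, hm]) (fun _ _ => by positivity)
    _ ≤ ∏ i, (∫⁻ x, ‖g i x‖ₑ ^ 2 ∂μ) ^ (m : ℝ)⁻¹ := by
        refine Finset.prod_le_prod' fun i _ =>
          ENNReal.rpow_le_rpow (lintegral_mono fun x => ?_) (by positivity)
        have hx : ‖g i x‖ₑ ≤ 1 := by
          rw [← ofReal_norm]
          exact ENNReal.ofReal_le_one.2 (hg1 i x)
        exact pow_le_pow_of_le_one zero_le hx hι

section

variable {V : Type*} [NormedAddCommGroup V] [InnerProductSpace ℝ V] [FiniteDimensional ℝ V]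
  [MeasurableSpace V] [BorelSpace V]

noncomputable def densityCharFun (q : V → ℝ) (t : V) : ℂ :=
  ∫ x, cexp (⟪t, x⟫ * I) * q x

variable {q : V → ℝ}

theorem continuous_densityCharFun (hq : Integrable q) : Continuous (densityCharFun q) := by
  refine continuous_of_dominated (bound := fun x => ‖q x‖) (fun t => ?_) (fun t => ?_) hq.norm
    (ae_of_all _ fun x => by fun_prop)
  · exact (by fun_prop : Continuous fun x => cexp (⟪t, x⟫ * I)).aestronglyMeasurable.mul
      hq.ofReal.aestronglyMeasurable
  · exact ae_of_all _ fun x => by simp [norm_exp_ofReal_mul_I]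

theorem norm_densityCharFun_le_one (hq0 : ∀ x, 0 ≤ q x) (hq1 : ∫ x, q x = 1) (t : V) :
    ‖densityCharFun q t‖ ≤ 1 :=
  calc ‖densityCharFun q t‖ ≤ ∫ x, ‖cexp (⟪t, x⟫ * I) * q x‖ := norm_integral_le_integral_norm _
    _ = 1 := by simpa [norm_exp_ofReal_mul_I, abs_of_nonneg (hq0 _)] using hq1

theorem ofReal_gaussian_mul_norm_densityCharFun_sq (ε : ℝ) (t : V) :
    ((Real.exp (-ε * ‖t‖ ^ 2) * ‖densityCharFun q t‖ ^ 2 : ℝ) : ℂ) =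
      ∫ p : V × V, cexp (-ε * ‖t‖ ^ 2 + I * ⟪p.1 - p.2, t⟫) * (q p.1 * q p.2) := by
  have hconj : conj (densityCharFun q t) = ∫ y, cexp (-⟪t, y⟫ * I) * q y := by
    rw [densityCharFun, ← integral_conj]
    congr 1 with y
    rw [map_mul, ← exp_conj]
    simp
  have hsplit : ∀ p : V × V, cexp (-ε * ‖t‖ ^ 2 + I * ⟪p.1 - p.2, t⟫) * (q p.1 * q p.2) =
      Real.exp (-ε * ‖t‖ ^ 2) *
        ((cexp (⟪t, p.1⟫ * I) * q p.1) * (cexp (-⟪t, p.2⟫ * I) * q p.2)) := by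
    intro p
    rw [inner_sub_left, real_inner_comm p.1, real_inner_comm p.2]
    push_cast
    rw [show -ε * (‖t‖ : ℂ) ^ 2 + I * (⟪p.1, t⟫ - ⟪p.2, t⟫) =
      -ε * ‖t‖ ^ 2 + ⟪p.1, t⟫ * I + -⟪p.2, t⟫ * I by ring, exp_add, exp_add]
    ring
  rw [integral_congr_ae (ae_of_all _ hsplit), integral_const_mul, Measure.volume_eq_prod,
    integral_prod_mul (fun x => cexp (⟪t, x⟫ * I) * q x) (fun y => cexp (-⟪t, y⟫ * I) * q y),
    ← densityCharFun, ← hconj, mul_conj, normSq_eq_norm_sq]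
  push_cast
  rfl

theorem integrable_rexp_neg_mul_sq_norm {b : ℝ} (hb : 0 < b) :
    Integrable fun v : V => Real.exp (-b * ‖v‖ ^ 2) :=
  .of_integral_ne_zero <| by rw [GaussianFourier.integral_rexp_neg_mul_sq_norm hb]; positivity

theorem integrable_gaussian_exp_inner_mul_prod {ε : ℝ} (hε : 0 < ε) (hq : Integrable q) :
    Integrable fun z : V × V × V =>
      cexp (-ε * ‖z.1‖ ^ 2 + I * ⟪z.2.1 - z.2.2, z.1⟫) * (q z.2.1 * q z.2.2) := by
  have hqq : Integrable fun p : V × V => (q p.1 : ℂ) * q p.2 := hq.ofReal.mul_prod hq.ofReal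
  refine ((integrable_rexp_neg_mul_sq_norm hε).mul_prod hqq.norm).mono' ?_ (ae_of_all _ fun z => ?_)
  · exact (by fun_prop : Continuous fun z : V × V × V =>
      cexp (-ε * ‖z.1‖ ^ 2 + I * ⟪z.2.1 - z.2.2, z.1⟫)).aestronglyMeasurable.mul
        hqq.aestronglyMeasurable.comp_snd
  · simp [norm_exp, ← ofReal_pow]

theorem integral_cexp_neg_mul_sq_norm_add_I_mul_inner {ε : ℝ} (hε : 0 < ε) (w : V) :
    ∫ t : V, cexp (-ε * ‖t‖ ^ 2 + I * ⟪w, t⟫) =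
      ((π / ε) ^ (finrank ℝ V / 2 : ℝ) * Real.exp (-(4 * ε)⁻¹ * ‖w‖ ^ 2) : ℝ) := by
  rw [GaussianFourier.integral_cexp_neg_mul_sq_norm_add (by simpa using hε), ofReal_mul,
    ofReal_cpow (by positivity), ofReal_exp]
  push_cast
  congr 2
  rw [I_sq]
  ring

theorem integral_gaussian_mul_norm_densityCharFun_sq {ε : ℝ} (hε : 0 < ε) (hq : Integrable q) :
    ∫ t, Real.exp (-ε * ‖t‖ ^ 2) * ‖densityCharFun q t‖ ^ 2 =
      ∫ p : V × V, (π / ε) ^ (finrank ℝ V / 2 : ℝ) *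
        Real.exp (-(4 * ε)⁻¹ * ‖p.1 - p.2‖ ^ 2) * (q p.1 * q p.2) := by
  apply ofReal_injective
  rw [← integral_complex_ofReal, ← integral_complex_ofReal]
  simp_rw [ofReal_gaussian_mul_norm_densityCharFun_sq]
  rw [integral_integral_swap (integrable_gaussian_exp_inner_mul_prod hε hq)]
  refine integral_congr_ae (ae_of_all _ fun p => ?_)
  simp_rw [integral_mul_const, integral_cexp_neg_mul_sq_norm_add_I_mul_inner hε]
  push_cast
  ring

theorem lintegral_ofReal_rexp_neg_mul_sq_norm {b : ℝ} (hb : 0 < b) :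
    ∫⁻ v : V, ENNReal.ofReal (Real.exp (-b * ‖v‖ ^ 2)) =
      ENNReal.ofReal ((π / b) ^ (finrank ℝ V / 2 : ℝ)) := by
  rw [← GaussianFourier.integral_rexp_neg_mul_sq_norm hb, ofReal_integral_eq_lintegral_ofReal
    (integrable_rexp_neg_mul_sq_norm hb) (ae_of_all _ fun _ => by positivity)]

theorem lintegral_gaussian_kernel_mul_le {ε : ℝ} (hε : 0 < ε) (hq : Measurable q)
    (hq0 : ∀ x, 0 ≤ q x) (hq1 : ∫ x, q x = 1) {M : ℝ} (hqM : ∀ x, q x ≤ M) :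
    ∫⁻ p : V × V, ENNReal.ofReal ((π / ε) ^ (finrank ℝ V / 2 : ℝ) *
        Real.exp (-(4 * ε)⁻¹ * ‖p.1 - p.2‖ ^ 2) * (q p.1 * q p.2)) ≤
      ENNReal.ofReal ((2 * π) ^ finrank ℝ V * M) := by
  set c := (π / ε) ^ (finrank ℝ V / 2 : ℝ)
  have hc : 0 ≤ c := by positivity
  set k : V → ℝ := fun w => Real.exp (-(4 * ε)⁻¹ * ‖w‖ ^ 2)
  have hq1' : ∫⁻ x, ENNReal.ofReal (q x) = 1 := by
    rw [← ofReal_integral_eq_lintegral_ofReal (.of_integral_ne_zero (by simp [hq1]))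
      (ae_of_all _ hq0), hq1, ENNReal.ofReal_one]
  have hconst : c * (π / (4 * ε)⁻¹) ^ (finrank ℝ V / 2 : ℝ) = (2 * π) ^ finrank ℝ V := by
    rw [← Real.mul_rpow (by positivity) (by positivity),
      show π / ε * (π / (4 * ε)⁻¹) = (2 * π) ^ (2 : ℝ) by rw [Real.rpow_two]; field_simp; ring,
      ← Real.rpow_mul (by positivity), ← Real.rpow_natCast]
    ring_nf
  calc ∫⁻ p : V × V, ENNReal.ofReal (c * k (p.1 - p.2) * (q p.1 * q p.2))
      = ENNReal.ofReal c * ∫⁻ p : V × V,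
          ENNReal.ofReal (k (p.1 - p.2)) * ENNReal.ofReal (q p.1) * ENNReal.ofReal (q p.2) := by
        rw [← lintegral_const_mul' _ _ ENNReal.ofReal_ne_top]
        refine lintegral_congr fun p => ?_
        rw [ENNReal.ofReal_mul (mul_nonneg hc (Real.exp_nonneg _)), ENNReal.ofReal_mul hc,
          ENNReal.ofReal_mul (hq0 _)]
        ring
    _ ≤ ENNReal.ofReal c * ((∫⁻ x, ENNReal.ofReal (q x)) * ENNReal.ofReal M *
          ∫⁻ w, ENNReal.ofReal (k w)) := by
        rw [Measure.volume_eq_prod]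
        gcongr
        exact lintegral_prod_mul_kernel_sub_le (by fun_prop) (by fun_prop)
          fun x => ENNReal.ofReal_le_ofReal (hqM x)
    _ = ENNReal.ofReal ((2 * π) ^ finrank ℝ V * M) := by
        rw [hq1', lintegral_ofReal_rexp_neg_mul_sq_norm (by positivity), one_mul,
          ← ENNReal.ofReal_mul ((hq0 0).trans (hqM 0)), ← ENNReal.ofReal_mul hc, ← hconst]
        ring_nf

theorem lintegral_gaussian_mul_enorm_densityCharFun_sq_le {ε : ℝ} (hε : 0 < ε)
    (hq : Measurable q) (hq0 : ∀ x, 0 ≤ q x) (hq1 : ∫ x, q x = 1) {M : ℝ} (hqM : ∀ x, q x ≤ M) :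
    ∫⁻ t, ENNReal.ofReal (Real.exp (-ε * ‖t‖ ^ 2)) * ‖densityCharFun q t‖ₑ ^ 2 ≤
      ENNReal.ofReal ((2 * π) ^ finrank ℝ V * M) := by
  have hqi : Integrable q := .of_integral_ne_zero (by simp [hq1])
  have hint : Integrable fun t => Real.exp (-ε * ‖t‖ ^ 2) * ‖densityCharFun q t‖ ^ 2 :=
    (integrable_rexp_neg_mul_sq_norm hε).mul_bdd (c := 1)
      ((continuous_densityCharFun hqi).norm.pow 2).aestronglyMeasurable
      (ae_of_all _ fun t => by
        rw [norm_pow, norm_norm]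
        exact pow_le_one₀ (norm_nonneg _) (norm_densityCharFun_le_one hq0 hq1 t))
  calc ∫⁻ t, ENNReal.ofReal (Real.exp (-ε * ‖t‖ ^ 2)) * ‖densityCharFun q t‖ₑ ^ 2
      = ENNReal.ofReal (∫ t, Real.exp (-ε * ‖t‖ ^ 2) * ‖densityCharFun q t‖ ^ 2) := by
        rw [ofReal_integral_eq_lintegral_ofReal hint (ae_of_all _ fun t => by positivity)]
        refine lintegral_congr fun t => ?_
        rw [ENNReal.ofReal_mul (by positivity), ENNReal.ofReal_pow (norm_nonneg _), ofReal_norm]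
    _ = ENNReal.ofReal (∫ p : V × V, (π / ε) ^ (finrank ℝ V / 2 : ℝ) *
          Real.exp (-(4 * ε)⁻¹ * ‖p.1 - p.2‖ ^ 2) * (q p.1 * q p.2)) := by
        rw [integral_gaussian_mul_norm_densityCharFun_sq hε hqi]
    _ ≤ ∫⁻ p : V × V, ENNReal.ofReal ((π / ε) ^ (finrank ℝ V / 2 : ℝ) *
          Real.exp (-(4 * ε)⁻¹ * ‖p.1 - p.2‖ ^ 2) * (q p.1 * q p.2)) := by
        rw [integral_eq_lintegral_of_nonneg_ae
          (ae_of_all _ fun p => by have := hq0 p.1; have := hq0 p.2; positivity)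
          (by fun_prop : Measurable fun p : V × V => (π / ε) ^ (finrank ℝ V / 2 : ℝ) *
            Real.exp (-(4 * ε)⁻¹ * ‖p.1 - p.2‖ ^ 2) * (q p.1 * q p.2)).aestronglyMeasurable]
        exact ENNReal.ofReal_toReal_le
    _ ≤ ENNReal.ofReal ((2 * π) ^ finrank ℝ V * M) :=
        lintegral_gaussian_kernel_mul_le hε hq hq0 hq1 hqM

theorem lintegral_enorm_densityCharFun_sq_le (hq : Measurable q) (hq0 : ∀ x, 0 ≤ q x)
    (hq1 : ∫ x, q x = 1) {M : ℝ} (hqM : ∀ x, q x ≤ M) :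
    ∫⁻ t, ‖densityCharFun q t‖ₑ ^ 2 ≤ ENNReal.ofReal ((2 * π) ^ finrank ℝ V * M) :=
  lintegral_le_of_forall_gaussian_mul_le
    ((continuous_densityCharFun (q := q) (.of_integral_ne_zero (by simp [hq1]))).measurable.enorm
      |>.pow_const 2).aemeasurable
    fun _ hε => lintegral_gaussian_mul_enorm_densityCharFun_sq_le hε hq hq0 hq1 hqM

end

/-- If `X_1,…,X_m` (`m ≥ 2`) are independent random vectors in `ℝ^d` with densities
`q_k ≤ M_k` and characteristic functions `v_k`, then the characteristic function
`f = v_1 ⋯ v_m` of the sum is integrable with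
`∫ |f(t)| dt ≤ (2π)^d (M_1 ⋯ M_m)^{1/m}`. -/
theorem charFun_prod_integrable (d m : ℕ) (hm : 2 ≤ m)
    (q : Fin m → EuclideanSpace ℝ (Fin d) → ℝ)
    (hq : ∀ k, Measurable (q k))
    (hq0 : ∀ k x, 0 ≤ q k x) (hq1 : ∀ k, ∫ x, q k x = 1)
    (M : Fin m → ℝ) (hqM : ∀ k x, q k x ≤ M k)
    (v : Fin m → EuclideanSpace ℝ (Fin d) → ℂ)
    (hv : ∀ k t, v k t = ∫ x, Complex.exp ((inner ℝ t x : ℝ) * Complex.I) * (q k x : ℂ))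
    (f : EuclideanSpace ℝ (Fin d) → ℂ)
    (hf : ∀ t, f t = ∏ k, v k t) :
    Integrable f ∧
      ∫ t, ‖f t‖ ≤ (2 * Real.pi) ^ d * (∏ k, M k) ^ ((m : ℝ)⁻¹) := by
  obtain rfl : v = fun k => densityCharFun (q k) := funext fun k => funext (hv k)
  obtain rfl : f = fun t => ∏ k, densityCharFun (q k) t := funext hf
  have hM0 : ∀ k, 0 ≤ M k := fun k => (hq0 k 0).trans (hqM k 0)
  have hcont : ∀ k, Continuous (densityCharFun (q k)) := fun k =>
    continuous_densityCharFun (.of_integral_ne_zero (by simp [hq1 k]))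
  have hbound : ∫⁻ t, ‖∏ k, densityCharFun (q k) t‖ₑ ≤
      ENNReal.ofReal ((2 * π) ^ d * (∏ k, M k) ^ (m : ℝ)⁻¹) :=
    calc ∫⁻ t, ‖∏ k, densityCharFun (q k) t‖ₑ
        ≤ ∏ k, (∫⁻ t, ‖densityCharFun (q k) t‖ₑ ^ 2) ^ (m : ℝ)⁻¹ := by
          simpa only [Fintype.card_fin] using lintegral_enorm_prod_le_prod_lintegral_enorm_sq_rpow
            (by simpa using hm) (fun k => (hcont k).aestronglyMeasurable)
            (fun k => norm_densityCharFun_le_one (hq0 k) (hq1 k))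
      _ ≤ ∏ k, ENNReal.ofReal ((2 * π) ^ d * M k) ^ (m : ℝ)⁻¹ := by
          gcongr with k
          simpa using lintegral_enorm_densityCharFun_sq_le (hq k) (hq0 k) (hq1 k) (hqM k)
      _ = ENNReal.ofReal ((2 * π) ^ d * (∏ k, M k) ^ (m : ℝ)⁻¹) := by
          simp_rw [ENNReal.ofReal_mul (by positivity : (0 : ℝ) ≤ (2 * π) ^ d)]
          rw [← ENNReal.ofReal_rpow_of_nonneg (Finset.prod_nonneg fun k _ => hM0 k) (by positivity),
            ENNReal.ofReal_prod_of_nonneg fun k _ => hM0 k]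
          simpa only [Fintype.card_fin] using
            ENNReal.prod_mul_rpow_inv_card (by simp; omega) _ fun k => ENNReal.ofReal (M k)
  have hcont_prod : Continuous fun t => ∏ k, densityCharFun (q k) t :=
    continuous_finsetProd _ fun k _ => hcont k
  refine ⟨⟨hcont_prod.aestronglyMeasurable, hbound.trans_lt ENNReal.ofReal_lt_top⟩, ?_⟩
  rw [integral_norm_eq_lintegral_enorm hcont_prod.aestronglyMeasurable]
  exact ENNReal.toReal_le_of_le_ofReal
    (mul_nonneg (by positivity) (Real.rpow_nonneg (Finset.prod_nonneg fun k _ => hM0 k) _)) hbound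
end

section
/- The maximum-of-density functional is sub-multiplicative under convolution: if S_m = X_1 + ⋯ + X_m with the X_k independent random vectors in ℝ^d having bounded densities, then M(S_m) ≤ (M(X_1) ⋯ M(X_m))^{1/m}, where M(Y) denotes the essential supremum of the density of Y. -/
/-!
The law of a sum of independent random vectors is the convolution of their laws, and convolving
with a probability measure preserves a bound `ν ≤ c • ρ` when `ρ` is translation invariant.
Splitting off the summand `X_k` whose density has the smallest essential supremum thus gives
`M(S_m) ≤ min_k M(X_k)`, and the minimum is at most the geometric mean.
-/

open MeasureTheory ProbabilityTheory
open scoped ENNReal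

namespace MeasureTheory

theorem Measure.conv_le_smul_of_le_smul {G : Type*} [AddGroup G] [MeasurableSpace G]
    [MeasurableAdd₂ G] {μ ν ρ : Measure G} [SFinite ν] [ρ.IsAddLeftInvariant] {c : ℝ≥0∞}
    (h : ν ≤ c • ρ) : μ ∗ ν ≤ (μ Set.univ * c) • ρ := by
  refine Measure.le_iff.2 fun s hs => ?_
  calc (μ ∗ ν) s = ∫⁻ x, ν ((x + ·) ⁻¹' s) ∂μ := by
        rw [Measure.conv, Measure.map_apply measurable_add hs,
          Measure.prod_apply (measurable_add hs)]
        rfl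
    _ ≤ ∫⁻ _, c * ρ s ∂μ := lintegral_mono fun x => by
        simpa [measure_preimage_add] using h ((x + ·) ⁻¹' s)
    _ = ((μ Set.univ * c) • ρ) s := by
        rw [lintegral_const, Measure.smul_apply, smul_eq_mul]; ring

theorem map_le_essSup_pdf_smul {Ω E : Type*} [MeasurableSpace Ω] [MeasurableSpace E]
    (X : Ω → E) (P : Measure Ω) (μ : Measure E) [HasPDF X P μ] :
    P.map X ≤ essSup (pdf X P μ) μ • μ := by
  calc P.map X = μ.withDensity (pdf X P μ) := map_eq_withDensity_pdf X P μ
    _ ≤ μ.withDensity (fun _ => essSup (pdf X P μ) μ) := withDensity_mono ae_le_essSup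
    _ = essSup (pdf X P μ) μ • μ := withDensity_const _

end MeasureTheory

theorem ENNReal.le_rpow_inv_card_prod_of_forall_le {ι : Type*} [Fintype ι] [Nonempty ι]
    {f : ι → ℝ≥0∞} {a : ℝ≥0∞} (h : ∀ i, a ≤ f i) :
    a ≤ (∏ i, f i) ^ ((Fintype.card ι : ℝ)⁻¹) := by
  have hcard : (Fintype.card ι : ℝ) ≠ 0 := by positivity
  calc a = (a ^ Fintype.card ι) ^ ((Fintype.card ι : ℝ)⁻¹) := by
        rw [← ENNReal.rpow_natCast, ← ENNReal.rpow_mul, mul_inv_cancel₀ hcard, ENNReal.rpow_one]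
    _ ≤ (∏ i, f i) ^ ((Fintype.card ι : ℝ)⁻¹) := by
        gcongr
        simpa using Finset.prod_le_prod' fun i (_ : i ∈ Finset.univ) => h i

theorem maxDensity_sum_le_geometric_mean_general (d m : ℕ) (hm : 2 ≤ m)
    {Ω : Type*} [MeasureSpace Ω] [IsProbabilityMeasure (ℙ : Measure Ω)]
    (X : Fin m → Ω → EuclideanSpace ℝ (Fin d))
    (hmeas : ∀ k, Measurable (X k))
    (hindep : iIndepFun X ℙ)
    (hpdf : ∀ k, HasPDF (X k) ℙ) :
    Measure.map (fun ω => ∑ k, X k ω) ℙ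
      ≤ ((∏ k, essSup (pdf (X k) ℙ volume) volume) ^ ((m : ℝ)⁻¹)) • volume := by
  set M : Fin m → ℝ≥0∞ := fun k => essSup (pdf (X k) ℙ volume) volume
  have : NeZero m := ⟨by omega⟩
  obtain ⟨k₀, -, hk₀⟩ := Finset.univ.exists_min_image M Finset.univ_nonempty
  set A := ∑ j ∈ Finset.univ.erase k₀, X j
  have hA : Measurable A := by
    simpa only [A, Finset.sum_fn] using Finset.measurable_sum _ fun j _ => hmeas j
  have hsplit : (fun ω => ∑ k, X k ω) = A + X k₀ := by
    funext ω
    simp [A, Finset.sum_apply]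
  have hAX : IndepFun A (X k₀) ℙ :=
    hindep.indepFun_finsetSum_of_notMem hmeas (Finset.notMem_erase k₀ _)
  have := hpdf k₀
  calc Measure.map (fun ω => ∑ k, X k ω) ℙ = Measure.map A ℙ ∗ Measure.map (X k₀) ℙ := by
        rw [hsplit]; exact hAX.map_add_eq_map_conv_map hA (hmeas k₀)
    _ ≤ (Measure.map A ℙ Set.univ * M k₀) • volume :=
        Measure.conv_le_smul_of_le_smul (map_le_essSup_pdf_smul _ _ _)
    _ ≤ ((∏ k, M k) ^ ((m : ℝ)⁻¹)) • volume := by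
        rw [Measure.map_apply hA MeasurableSet.univ, Set.preimage_univ, measure_univ, one_mul]
        gcongr
        simpa using ENNReal.le_rpow_inv_card_prod_of_forall_le fun k => hk₀ k (Finset.mem_univ k)

/-- Sub-multiplicativity of the maximum-of-density functional under convolution:
if `S_m = X_1 + ⋯ + X_m` with the `X_k` independent random vectors in `ℝ^d` having
bounded densities, then `M(S_m) ≤ (M(X_1) ⋯ M(X_m))^{1/m}`, where `M(Y)` is the
essential supremum of the density of `Y`. (The conclusion "the density of `S_m` is
bounded by `C`" is expressed as: the distribution of `S_m` is dominated by `C` times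
Lebesgue measure.) -/
theorem maxDensity_sum_le_geometric_mean (d m : ℕ) (hm : 2 ≤ m)
    {Ω : Type*} [MeasureSpace Ω] [IsProbabilityMeasure (ℙ : Measure Ω)]
    (X : Fin m → Ω → EuclideanSpace ℝ (Fin d))
    (hmeas : ∀ k, Measurable (X k))
    (hindep : iIndepFun X ℙ)
    (hpdf : ∀ k, HasPDF (X k) ℙ)
    (hbdd : ∀ k, essSup (pdf (X k) ℙ volume) volume ≠ ⊤) :
    Measure.map (fun ω => ∑ k, X k ω) ℙ
      ≤ ((∏ k, essSup (pdf (X k) ℙ volume) volume) ^ ((m : ℝ)⁻¹)) • volume :=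
  maxDensity_sum_le_geometric_mean_general d m hm X hmeas hindep hpdf
end

section
/- For x ≥ 1/2, √(2e) (x/e)^x ≤ Γ(x + 1/2) ≤ √(2π) (x/e)^x. -/
/-!
Write `ψ = logDeriv Γ` and `g x = log Γ(x + 1/2) - x log x + x = log (Γ(x + 1/2) / (x/e)^x)`.
Its derivative `ψ(x + 1/2) - log x` is nonnegative for `x > 1/2`: it does not increase under
`x ↦ x + 1`, because `ψ(t + 1) = ψ(t) + 1/t` and `log (1 + 1/t) ≥ 1/(t + 1/2)`, and
log-convexity of `Γ` gives `ψ(t + 1) ≥ log t`, so it is bounded below by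
`log (x + n - 1/2) - log (x + n) → 0`. Hence `g` increases from `g (1/2) = log √(2e)` towards
its limit `log √(2π)`, which Stirling's formula gives along `x = n + 1/2`.
-/

open Real Filter Set Topology

namespace Real

lemma ne_neg_natCast_of_pos {t : ℝ} (ht : 0 < t) (m : ℕ) : t ≠ -m :=
  ((neg_nonpos.mpr m.cast_nonneg).trans_lt ht).ne'

lemma hasDerivAt_log_comp_Gamma {t : ℝ} (ht : ∀ m : ℕ, t ≠ -m) :
    HasDerivAt (log ∘ Gamma) (logDeriv Gamma t) t :=
  (differentiableAt_Gamma ht).hasDerivAt.log (Gamma_ne_zero ht)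

lemma logDeriv_Gamma_add_one {t : ℝ} (ht : ∀ m : ℕ, t ≠ -m) :
    logDeriv Gamma (t + 1) = logDeriv Gamma t + 1 / t := by
  have ht₀ : t ≠ 0 := by simpa using ht 0
  have hrec : (fun u => Gamma (u + 1)) =ᶠ[𝓝 t] fun u => u * Gamma u := by
    filter_upwards [eventually_ne_nhds ht₀] with u hu using Gamma_add_one hu
  have := (logDeriv_congr_nhds hrec).eq_of_nhds
  rw [logDeriv_mul (f := fun u => u) t ht₀ (Gamma_ne_zero ht) differentiableAt_fun_id
    (differentiableAt_Gamma ht), logDeriv_id'] at this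
  rw [add_comm (logDeriv Gamma t), ← this, logDeriv_apply, logDeriv_apply, deriv_comp_add_const]

lemma log_le_logDeriv_Gamma_add_one {t : ℝ} (ht : 0 < t) : log t ≤ logDeriv Gamma (t + 1) := by
  have hslope := convexOn_log_Gamma.slope_le_of_hasDerivAt (mem_Ioi.2 ht) (mem_Ioi.2 (by linarith))
    (lt_add_one t) (hasDerivAt_log_comp_Gamma (ne_neg_natCast_of_pos (by linarith)))
  rwa [slope_def_field, add_sub_cancel_left, div_one, Function.comp_apply, Function.comp_apply,
    Gamma_add_one ht.ne', log_mul ht.ne' (Gamma_pos_of_pos ht).ne', add_sub_cancel_right] at hslope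

lemma inv_add_half_le_log_add_one_sub_log {t : ℝ} (ht : 0 < t) :
    (t + 1 / 2)⁻¹ ≤ log (t + 1) - log t := by
  have := le_hasSum (hasSum_log_one_add_inv ht) 0 fun k _ => by positivity
  rw [show 1 + t⁻¹ = (t + 1) / t by field_simp, log_div (by positivity) ht.ne'] at this
  refine (le_of_eq ?_).trans this
  rw [show t + 1 / 2 = (2 * t + 1) / 2 by ring]
  norm_num [div_eq_mul_inv]

lemma logDeriv_Gamma_add_one_add_half_sub_log_le {t : ℝ} (ht : 0 < t) :
    logDeriv Gamma (t + 1 + 1 / 2) - log (t + 1) ≤ logDeriv Gamma (t + 1 / 2) - log t := by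
  rw [add_right_comm, logDeriv_Gamma_add_one (ne_neg_natCast_of_pos (by positivity))]
  linarith [inv_add_half_le_log_add_one_sub_log ht, one_div (t + 1 / 2)]

lemma logDeriv_Gamma_add_nat_add_half_sub_log_le {x : ℝ} (hx : 0 < x) (n : ℕ) :
    logDeriv Gamma (x + n + 1 / 2) - log (x + n) ≤ logDeriv Gamma (x + 1 / 2) - log x := by
  induction n with
  | zero => simp
  | succ n ih =>
    rw [Nat.cast_succ, ← add_assoc]
    exact (logDeriv_Gamma_add_one_add_half_sub_log_le (by positivity)).trans ih

lemma log_le_logDeriv_Gamma_add_half {x : ℝ} (hx : 1 / 2 < x) :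
    log x ≤ logDeriv Gamma (x + 1 / 2) := by
  have hshift : Tendsto (fun n : ℕ => x + n) atTop atTop :=
    tendsto_atTop_add_const_left _ x tendsto_natCast_atTop_atTop
  rw [← sub_nonneg]
  refine le_of_tendsto ((tendsto_log_comp_add_sub_log (-1 / 2)).comp hshift)
    (Eventually.of_forall fun n => ?_)
  have hn : (0 : ℝ) ≤ n := n.cast_nonneg
  calc log (x + n + -1 / 2) - log (x + n)
      ≤ logDeriv Gamma (x + n + 1 / 2) - log (x + n) := by
        have := log_le_logDeriv_Gamma_add_one (t := x + n + -1 / 2) (by linarith)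
        rw [show x + n + -1 / 2 + 1 = x + n + 1 / 2 by ring] at this
        linarith
    _ ≤ logDeriv Gamma (x + 1 / 2) - log x :=
        logDeriv_Gamma_add_nat_add_half_sub_log_le (by linarith) n

noncomputable def logGammaAddHalfRatio (x : ℝ) : ℝ := log (Gamma (x + 1 / 2)) - x * log x + x

lemma Gamma_add_half_eq_exp_mul {x : ℝ} (hx : 0 < x) :
    Gamma (x + 1 / 2) = exp (logGammaAddHalfRatio x) * (x / exp 1) ^ x := by
  rw [rpow_def_of_pos (by positivity), log_div hx.ne' (exp_ne_zero 1), log_exp, ← exp_add,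
    logGammaAddHalfRatio, show log (Gamma (x + 1 / 2)) - x * log x + x + (log x - 1) * x
    = log (Gamma (x + 1 / 2)) by ring, exp_log (Gamma_pos_of_pos (by positivity))]

lemma hasDerivAt_logGammaAddHalfRatio {x : ℝ} (hx : 0 < x) :
    HasDerivAt logGammaAddHalfRatio (logDeriv Gamma (x + 1 / 2) - log x) x := by
  have hlogΓ := (hasDerivAt_log_comp_Gamma
    (ne_neg_natCast_of_pos (by positivity : 0 < x + 1 / 2))).comp_add_const x (1 / 2)
  have hxlogx : HasDerivAt (fun y => y * log y) (log x + 1) x := by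
    simpa [hx.ne'] using (hasDerivAt_id' x).fun_mul (hasDerivAt_log hx.ne')
  exact ((hlogΓ.fun_sub hxlogx).fun_add (hasDerivAt_id' x)).congr_deriv (by ring)

lemma monotoneOn_logGammaAddHalfRatio : MonotoneOn logGammaAddHalfRatio (Ici (1 / 2)) := by
  refine monotoneOn_of_hasDerivWithinAt_nonneg (f' := fun x => logDeriv Gamma (x + 1 / 2) - log x)
    (convex_Ici _) (fun x hx => ?_) (fun x hx => ?_) (fun x hx => ?_) <;>
    simp only [interior_Ici, mem_Ici, mem_Ioi] at hx
  · exact (hasDerivAt_logGammaAddHalfRatio (by linarith)).continuousAt.continuousWithinAt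
  · exact (hasDerivAt_logGammaAddHalfRatio (by linarith)).hasDerivWithinAt
  · exact sub_nonneg.2 (log_le_logDeriv_Gamma_add_half hx)

lemma logGammaAddHalfRatio_one_half : logGammaAddHalfRatio (1 / 2) = log √(2 * exp 1) := by
  rw [logGammaAddHalfRatio, add_halves, Gamma_one, log_one, log_sqrt (by positivity),
    log_mul two_ne_zero (exp_ne_zero 1), log_exp, one_div, log_inv]
  ring

lemma logGammaAddHalfRatio_nat_add_half {n : ℕ} (hn : n ≠ 0) :
    logGammaAddHalfRatio (n + 1 / 2) = log (Stirling.stirlingSeq n) + log 2 / 2 + 1 / 2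
      - (n + 1 / 2) * (log (n + 1 / 2) - log n) := by
  have hn' : (n : ℝ) ≠ 0 := Nat.cast_ne_zero.2 hn
  rw [logGammaAddHalfRatio, add_assoc, add_halves, Gamma_nat_eq_factorial,
    Stirling.log_stirlingSeq_formula, log_mul two_ne_zero hn', log_div hn' (exp_ne_zero 1), log_exp]
  ring

lemma tendsto_add_mul_log_add_sub_log (c y : ℝ) :
    Tendsto (fun x => (x + c) * (log (x + y) - log x)) atTop (𝓝 y) := by
  have hmain : Tendsto (fun x => x * (log (x + y) - log x)) atTop (𝓝 y) := by
    refine (tendsto_mul_log_one_add_div_atTop y).congr' ?_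
    filter_upwards [eventually_gt_atTop 0, eventually_gt_atTop (-y)] with x hx hxy
    rw [← log_div (by linarith) hx.ne', add_div, div_self hx.ne']
  simpa [add_mul] using hmain.add ((tendsto_log_comp_add_sub_log y).const_mul c)

lemma tendsto_logGammaAddHalfRatio_nat_add_half :
    Tendsto (fun n : ℕ => logGammaAddHalfRatio (n + 1 / 2)) atTop (𝓝 (log √(2 * π))) := by
  have hstirling : Tendsto (fun n => log (Stirling.stirlingSeq n)) atTop (𝓝 (log √π)) :=
    (continuousAt_log (sqrt_pos.2 pi_pos).ne').tendsto.comp Stirling.tendsto_stirlingSeq_sqrt_pi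
  have hlim := ((hstirling.add_const (log 2 / 2)).add_const (1 / 2)).sub
    ((tendsto_add_mul_log_add_sub_log (1 / 2) (1 / 2)).comp tendsto_natCast_atTop_atTop)
  rw [show log √π + log 2 / 2 + 1 / 2 - 1 / 2 = log √(2 * π) by
    rw [log_sqrt pi_pos.le, log_sqrt (by positivity), log_mul two_ne_zero pi_ne_zero]; ring] at hlim
  refine hlim.congr' ?_
  filter_upwards [eventually_ne_atTop 0] with n hn
  exact (logGammaAddHalfRatio_nat_add_half hn).symm

end Real

/-- Batir's two-sided bounds: for `x ≥ 1/2`,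
`√(2e) (x/e)^x ≤ Γ(x + 1/2) ≤ √(2π) (x/e)^x`. -/
theorem batir_gamma_bounds (x : ℝ) (hx : 1 / 2 ≤ x) :
    Real.sqrt (2 * Real.exp 1) * (x / Real.exp 1) ^ x ≤ Real.Gamma (x + 1 / 2) ∧
    Real.Gamma (x + 1 / 2) ≤ Real.sqrt (2 * Real.pi) * (x / Real.exp 1) ^ x := by
  have hlower : logGammaAddHalfRatio (1 / 2) ≤ logGammaAddHalfRatio x :=
    monotoneOn_logGammaAddHalfRatio (mem_Ici.2 le_rfl) (mem_Ici.2 hx) hx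
  have hupper : logGammaAddHalfRatio x ≤ log √(2 * π) := by
    refine ge_of_tendsto tendsto_logGammaAddHalfRatio_nat_add_half ?_
    filter_upwards [eventually_ge_atTop ⌈x⌉₊] with n hn
    have hxn : x ≤ n := (Nat.le_ceil x).trans (Nat.cast_le.2 hn)
    exact monotoneOn_logGammaAddHalfRatio (mem_Ici.2 hx) (mem_Ici.2 (by linarith)) (by linarith)
  rw [Gamma_add_half_eq_exp_mul (by linarith),
    ← exp_log (sqrt_pos.2 (by positivity : 0 < 2 * π)),
    ← exp_log (sqrt_pos.2 (by positivity : 0 < 2 * exp 1)), ← logGammaAddHalfRatio_one_half]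
  constructor <;> gcongr
end
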